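/- arXiv:2109.10887 — 7 statements merged into one kernel-verified Lean document; each statement's English description precedes it below -/
import Mathlib

section
/- For all s, t ∈ [0,1], lim_{N→∞} N · Σ_{n=N+1}^∞ 2·sin((n+1/2)πs)·sin((n+1/2)πt) / ((n+1/2)²π²) equals 1/π² if s = t and t ∈ (0,1); equals 2/π² if s = t = 1; and equals 0 in all other cases (in particular when s ≠ t, and when s = t = 0). -/
open Filter Topology
open Real

lemma summable_bound (f : ℕ → ℝ) (h : ∀ n, |f n| ≤ 1 / ((n : ℝ) + 1) ^ 2) :
    Summable f := by
  have h2 : Summable (fun n : ℕ => 1 / ((n : ℝ) + 1) ^ 2) := by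
    have := (Real.summable_one_div_nat_pow (p := 2)).2 one_lt_two
    have := (summable_nat_add_iff (f := fun n : ℕ => 1 / (n : ℝ) ^ 2) 1).2 this
    simpa [add_comm] using this
  exact Summable.of_norm (h2.of_nonneg_of_le (fun n => norm_nonneg _) (by simpa using h))

lemma hasSum_telescope (u : ℕ → ℝ) (hpos : ∀ n, 0 ≤ u n - u (n+1))
    (hl : Tendsto u atTop (𝓝 0)) :
    HasSum (fun n => u n - u (n+1)) (u 0) := by
  rw [hasSum_iff_tendsto_nat_of_nonneg hpos]
  have : (fun P : ℕ => ∑ i ∈ Finset.range P, (u i - u (i+1))) = fun P => u 0 - u P := by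
    funext P; exact Finset.sum_range_sub' u P
  rw [this]
  simpa using tendsto_const_nhds.sub hl

lemma tendsto_inv_shift (c : ℝ) :
    Tendsto (fun n : ℕ => 1 / ((n : ℝ) + c)) atTop (𝓝 0) := by
  simp only [one_div]
  exact (tendsto_atTop_add_const_right atTop c tendsto_natCast_atTop_atTop).inv_tendsto_atTop

lemma term_bound (N n : ℕ) (F : ℝ) (hF : |F| ≤ 1) :
    |F / ((((n + N + 1 : ℕ) : ℝ) + 1/2) ^ 2 * Real.pi ^ 2)| ≤ 1 / ((n : ℝ) + 1) ^ 2 := by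
  have hπ : (3:ℝ) < Real.pi := Real.pi_gt_three
  have hn : (0:ℝ) ≤ (n:ℝ) := Nat.cast_nonneg n
  have hN : (0:ℝ) ≤ (N:ℝ) := Nat.cast_nonneg N
  push_cast
  have hD : (0:ℝ) < ((n:ℝ) + (N:ℝ) + 1 + 1/2) ^ 2 * Real.pi ^ 2 := by positivity
  rw [abs_div, abs_of_pos hD]
  apply div_le_div₀ (by positivity) hF (by positivity)
  calc ((n:ℝ) + 1) ^ 2 ≤ ((n:ℝ) + (N:ℝ) + 1 + 1/2) ^ 2 * 1 := by nlinarith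
    _ ≤ ((n:ℝ) + (N:ℝ) + 1 + 1/2) ^ 2 * Real.pi ^ 2 := by
        apply mul_le_mul_of_nonneg_left (by nlinarith) (by positivity)

lemma hasSum_upper (N : ℕ) :
    HasSum (fun n : ℕ => (1 / ((n : ℝ) + N + 1) - 1 / ((n : ℝ) + N + 2)) / Real.pi ^ 2)
      ((1 / ((N : ℝ) + 1)) / Real.pi ^ 2) := by
  have := hasSum_telescope (fun n : ℕ => 1 / ((n : ℝ) + N + 1))
    (fun n => by
      have : ((n:ℝ) + N + 1) ≤ ((n:ℝ) + 1 + N + 1) := by push_cast; linarith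
      have := one_div_le_one_div_of_le (by positivity) this
      push_cast
      simp only [sub_nonneg]
      push_cast at this ⊢; linarith)
    (by simpa [add_assoc] using tendsto_inv_shift ((N:ℝ) + 1))
  have h2 := this.div_const (Real.pi ^ 2)
  convert h2 using 2 with n
  · rfl
  · push_cast; ring_nf
  · norm_num

lemma hasSum_lower (N : ℕ) :
    HasSum (fun n : ℕ => (1 / ((n : ℝ) + N + 1 + 1/2) - 1 / ((n : ℝ) + N + 2 + 1/2)) / Real.pi ^ 2)
      ((1 / ((N : ℝ) + 1 + 1/2)) / Real.pi ^ 2) := by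
  have := hasSum_telescope (fun n : ℕ => 1 / ((n : ℝ) + N + 1 + 1/2))
    (fun n => by
      have h : ((n:ℝ) + N + 1 + 1/2) ≤ ((n:ℝ) + 1 + N + 1 + 1/2) := by push_cast; linarith
      have := one_div_le_one_div_of_le (by positivity) h
      simp only [sub_nonneg]
      push_cast at this ⊢; linarith)
    (by simpa [add_assoc] using tendsto_inv_shift ((N:ℝ) + 1 + 1/2))
  have h2 := this.div_const (Real.pi ^ 2)
  convert h2 using 2 with n
  · rfl
  · push_cast; ring_nf
  · norm_num

lemma tail_one :
    Tendsto (fun N : ℕ => (N : ℝ) * ∑' n : ℕ,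
      1 / ((((n + N + 1 : ℕ) : ℝ) + 1/2) ^ 2 * Real.pi ^ 2)) atTop (𝓝 (1 / Real.pi ^ 2)) := by
  have hπ : (0:ℝ) < Real.pi := Real.pi_pos
  have hsum : ∀ N : ℕ, Summable (fun n : ℕ => 1 / ((((n + N + 1 : ℕ) : ℝ) + 1/2) ^ 2 * Real.pi ^ 2)) := by
    intro N
    apply summable_bound
    intro n
    have := term_bound N n 1 (by norm_num)
    simpa using this
  -- bounds on the tsum
  have hub : ∀ N : ℕ, (∑' n : ℕ, 1 / ((((n + N + 1 : ℕ) : ℝ) + 1/2) ^ 2 * Real.pi ^ 2))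
      ≤ (1 / ((N : ℝ) + 1)) / Real.pi ^ 2 := by
    intro N
    rw [← (hasSum_upper N).tsum_eq]
    apply Summable.tsum_le_tsum _ (hsum N) (hasSum_upper N).summable
    intro n
    have hden : ((n:ℝ) + N + 1) * ((n:ℝ) + N + 2) ≤ (((n:ℝ) + N + 1) + 1/2) ^ 2 := by nlinarith
    have hpos : (0:ℝ) < ((n:ℝ) + N + 1) * ((n:ℝ) + N + 2) := by positivity
    have key : 1 / ((((n:ℝ) + N + 1) + 1/2) ^ 2) ≤ 1 / ((n:ℝ) + N + 1) - 1 / ((n:ℝ) + N + 2) := by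
      have h1 : 1 / ((n:ℝ) + N + 1) - 1 / ((n:ℝ) + N + 2)
          = 1 / (((n:ℝ) + N + 1) * ((n:ℝ) + N + 2)) := by
        field_simp; ring
      rw [h1]
      exact one_div_le_one_div_of_le hpos hden
    push_cast
    calc 1 / (((n:ℝ) + N + 1 + 1/2) ^ 2 * Real.pi ^ 2)
        = (1 / (((n:ℝ) + N + 1 + 1/2) ^ 2)) / Real.pi ^ 2 := by rw [div_div]
      _ ≤ (1 / ((n:ℝ) + N + 1) - 1 / ((n:ℝ) + N + 2)) / Real.pi ^ 2 := by gcongr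
  have hlb : ∀ N : ℕ, (1 / ((N : ℝ) + 1 + 1/2)) / Real.pi ^ 2
      ≤ (∑' n : ℕ, 1 / ((((n + N + 1 : ℕ) : ℝ) + 1/2) ^ 2 * Real.pi ^ 2)) := by
    intro N
    rw [← (hasSum_lower N).tsum_eq]
    apply Summable.tsum_le_tsum _ (hasSum_lower N).summable (hsum N)
    intro n
    have hden : ((n:ℝ) + N + 1 + 1/2) * ((n:ℝ) + N + 2 + 1/2) ≥ (((n:ℝ) + N + 1) + 1/2) ^ 2 := by nlinarith
    have hpos : (0:ℝ) < ((n:ℝ) + N + 1 + 1/2) := by positivity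
    have key : 1 / ((n:ℝ) + N + 1 + 1/2) - 1 / ((n:ℝ) + N + 2 + 1/2)
        ≤ 1 / ((((n:ℝ) + N + 1) + 1/2) ^ 2) := by
      have h1 : 1 / ((n:ℝ) + N + 1 + 1/2) - 1 / ((n:ℝ) + N + 2 + 1/2)
          = 1 / (((n:ℝ) + N + 1 + 1/2) * ((n:ℝ) + N + 2 + 1/2)) := by
        field_simp; ring
      rw [h1]
      exact one_div_le_one_div_of_le (by positivity) hden
    push_cast
    calc (1 / ((n:ℝ) + N + 1 + 1/2) - 1 / ((n:ℝ) + N + 2 + 1/2)) / Real.pi ^ 2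
        ≤ (1 / (((n:ℝ) + N + 1 + 1/2) ^ 2)) / Real.pi ^ 2 := by gcongr
      _ = 1 / (((n:ℝ) + N + 1 + 1/2) ^ 2 * Real.pi ^ 2) := by rw [div_div]
  -- squeeze
  apply tendsto_of_tendsto_of_tendsto_of_le_of_le
    (g := fun N : ℕ => (N : ℝ) * ((1 / ((N : ℝ) + 1 + 1/2)) / Real.pi ^ 2))
    (h := fun N : ℕ => (N : ℝ) * ((1 / ((N : ℝ) + 1)) / Real.pi ^ 2))
  · have h2 := (tendsto_natCast_div_add_atTop (𝕜 := ℝ) (1 + 1/2 : ℝ)).div_const (Real.pi ^ 2)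
    have heq : (fun N : ℕ => (N : ℝ) * ((1 / ((N : ℝ) + 1 + 1/2)) / Real.pi ^ 2))
        = fun N : ℕ => ((N : ℝ) / ((N : ℝ) + (1 + 1/2))) / Real.pi ^ 2 := by
      funext N; ring
    rw [heq]
    simpa using h2
  · have h2 := (tendsto_natCast_div_add_atTop (𝕜 := ℝ) (1 : ℝ)).div_const (Real.pi ^ 2)
    have heq : (fun N : ℕ => (N : ℝ) * ((1 / ((N : ℝ) + 1)) / Real.pi ^ 2))
        = fun N : ℕ => ((N : ℝ) / ((N : ℝ) + 1)) / Real.pi ^ 2 := by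
      funext N; ring
    rw [heq]
    simpa using h2
  · intro N
    exact mul_le_mul_of_nonneg_left (hlb N) (Nat.cast_nonneg N)
  · intro N
    exact mul_le_mul_of_nonneg_left (hub N) (Nat.cast_nonneg N)

lemma tail_cos (θ : ℝ) (hθ : Real.sin (θ/2) ≠ 0) :
    Tendsto (fun N : ℕ => (N : ℝ) * ∑' n : ℕ,
      Real.cos ((((n + N + 1 : ℕ) : ℝ) + 1/2) * θ) /
        ((((n + N + 1 : ℕ) : ℝ) + 1/2) ^ 2 * Real.pi ^ 2)) atTop (𝓝 0) := by
  have hπ : (0:ℝ) < Real.pi := Real.pi_pos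
  set C : ℝ := 1 / |2 * Real.sin (θ/2)| with hC
  have hCpos : 0 < C := by
    rw [hC]; positivity
  -- the key per-N bound on the tail sum
  have main : ∀ N : ℕ, |∑' n : ℕ,
      Real.cos ((((n + N + 1 : ℕ) : ℝ) + 1/2) * θ) /
        ((((n + N + 1 : ℕ) : ℝ) + 1/2) ^ 2 * Real.pi ^ 2)|
      ≤ 3 * C * (1 / (((N:ℝ) + 1 + 1/2) ^ 2 * Real.pi ^ 2)) := by
    intro N
    set b : ℕ → ℝ := fun n => 1 / (((n:ℝ) + N + 1 + 1/2) ^ 2 * Real.pi ^ 2) with hbdef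
    set g : ℕ → ℝ := fun n => Real.sin (((n:ℝ) + N + 1) * θ) / (2 * Real.sin (θ/2)) with hgdef
    set f : ℕ → ℝ := fun n => Real.cos (((n:ℝ) + N + 1 + 1/2) * θ) * b n with hfdef
    have hfs : Summable f := by
      apply summable_bound
      intro n
      have := term_bound N n (Real.cos (((n:ℝ) + N + 1 + 1/2) * θ)) (Real.abs_cos_le_one _)
      rw [hfdef]
      simp only [hbdef]
      rw [show Real.cos (((n:ℝ) + N + 1 + 1/2) * θ) * (1 / (((n:ℝ) + N + 1 + 1/2) ^ 2 * Real.pi ^ 2))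
        = Real.cos (((n:ℝ) + N + 1 + 1/2) * θ) / (((n:ℝ) + N + 1 + 1/2) ^ 2 * Real.pi ^ 2) from by ring]
      convert this using 3 <;> push_cast <;> ring
    have hts : (∑' n : ℕ, Real.cos ((((n + N + 1 : ℕ) : ℝ) + 1/2) * θ) /
        ((((n + N + 1 : ℕ) : ℝ) + 1/2) ^ 2 * Real.pi ^ 2)) = ∑' n, f n := by
      apply tsum_congr
      intro n
      rw [hfdef]; simp only [hbdef]
      push_cast
      ring
    rw [hts]
    -- bounds on b and g
    have hbpos : ∀ n, 0 ≤ b n := by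
      intro n; rw [hbdef]; positivity
    have hble : ∀ m n : ℕ, m ≤ n → b n ≤ b m := by
      intro m n hmn
      simp only [hbdef]
      apply one_div_le_one_div_of_le (by positivity)
      have : ((m:ℝ)) ≤ (n:ℝ) := Nat.cast_le.mpr hmn
      have h2 : ((m:ℝ) + N + 1 + 1/2) ^ 2 ≤ ((n:ℝ) + N + 1 + 1/2) ^ 2 := by nlinarith [show (0:ℝ) ≤ (m:ℝ) from Nat.cast_nonneg m, show (0:ℝ) ≤ (N:ℝ) from Nat.cast_nonneg N]
      apply mul_le_mul_of_nonneg_right h2 (by positivity)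
    have hdne : (2 * Real.sin (θ/2)) ≠ 0 := by
      intro h
      apply hθ
      have := mul_eq_zero.1 h
      rcases this with h | h
      · norm_num at h
      · exact h
    have hdpos : 0 < |2 * Real.sin (θ/2)| := abs_pos.2 hdne
    have hg : ∀ n, |g n| ≤ C := by
      intro n
      rw [hgdef, hC]
      rw [abs_div]
      exact (div_le_div_iff_of_pos_right hdpos).2 (Real.abs_sin_le_one _)
    -- the key Abel-type identity
    have key : ∀ n : ℕ, f n = (g (n+1) * b (n+1) - g n * b n) + g (n+1) * (b n - b (n+1)) := by
      intro n
      have hgg : g (n+1) - g n = Real.cos (((n:ℝ) + N + 1 + 1/2) * θ) := by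
        rw [hgdef]
        simp only
        rw [div_sub_div_same]
        rw [show (((n:ℕ)+1:ℕ):ℝ) = (n:ℝ) + 1 from by push_cast; ring]
        rw [Real.sin_sub_sin]
        rw [show (((n:ℝ) + 1 + N + 1) * θ - ((n:ℝ) + N + 1) * θ) / 2 = θ / 2 from by ring]
        rw [show (((n:ℝ) + 1 + N + 1) * θ + ((n:ℝ) + N + 1) * θ) / 2 = ((n:ℝ) + N + 1 + 1/2) * θ from by ring]
        field_simp
      have : f n = (g (n+1) - g n) * b n := by rw [hfdef]; simp only; rw [hgg]
      rw [this]; ring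
    -- bound on partial sums
    have hpart : ∀ P : ℕ, |∑ n ∈ Finset.range P, f n| ≤ 3 * C * b 0 := by
      intro P
      have hsum_eq : ∑ n ∈ Finset.range P, f n
          = (g P * b P - g 0 * b 0) + ∑ n ∈ Finset.range P, g (n+1) * (b n - b (n+1)) := by
        rw [← Finset.sum_range_sub (fun n => g n * b n) P, ← Finset.sum_add_distrib]
        exact Finset.sum_congr rfl (fun n _ => key n)
      rw [hsum_eq]
      have h1 : |g P * b P| ≤ C * b 0 := by
        rw [abs_mul, abs_of_nonneg (hbpos P)]
        exact mul_le_mul (hg P) (hble 0 P (Nat.zero_le P)) (hbpos P) hCpos.le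
      have h2 : |g 0 * b 0| ≤ C * b 0 := by
        rw [abs_mul, abs_of_nonneg (hbpos 0)]
        exact mul_le_mul_of_nonneg_right (hg 0) (hbpos 0)
      have h3 : |∑ n ∈ Finset.range P, g (n+1) * (b n - b (n+1))| ≤ C * b 0 := by
        calc |∑ n ∈ Finset.range P, g (n+1) * (b n - b (n+1))|
            ≤ ∑ n ∈ Finset.range P, |g (n+1) * (b n - b (n+1))| :=
              Finset.abs_sum_le_sum_abs _ _
          _ ≤ ∑ n ∈ Finset.range P, C * (b n - b (n+1)) := by
              apply Finset.sum_le_sum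
              intro n _
              rw [abs_mul, abs_of_nonneg (sub_nonneg.2 (hble n (n+1) (Nat.le_succ n)))]
              exact mul_le_mul_of_nonneg_right (hg (n+1)) (sub_nonneg.2 (hble n (n+1) (Nat.le_succ n)))
          _ = C * (b 0 - b P) := by rw [← Finset.mul_sum, Finset.sum_range_sub' b P]
          _ ≤ C * b 0 := by
              apply mul_le_mul_of_nonneg_left _ hCpos.le
              linarith [hbpos P]
      calc |(g P * b P - g 0 * b 0) + ∑ n ∈ Finset.range P, g (n+1) * (b n - b (n+1))|
          ≤ |g P * b P| + |g 0 * b 0| + |∑ n ∈ Finset.range P, g (n+1) * (b n - b (n+1))| := by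
            have := abs_add_le (g P * b P - g 0 * b 0) (∑ n ∈ Finset.range P, g (n+1) * (b n - b (n+1)))
            have h4 := abs_sub (g P * b P) (g 0 * b 0)
            linarith
        _ ≤ C * b 0 + C * b 0 + C * b 0 := by linarith
        _ = 3 * C * b 0 := by ring
    have hb0 : b 0 = 1 / (((N:ℝ) + 1 + 1/2) ^ 2 * Real.pi ^ 2) := by
      rw [hbdef]; norm_num
    have := le_of_tendsto' (hfs.hasSum.tendsto_sum_nat.abs) hpart
    rw [← hb0]
    exact this
  -- squeeze to zero
  apply squeeze_zero_norm (a := fun N : ℕ => (3 * C / Real.pi ^ 2) * (1 / ((N:ℝ) + 1)))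
  · intro N
    have h0 := main N
    have hNn : (0:ℝ) ≤ (N:ℝ) := Nat.cast_nonneg N
    rw [Real.norm_eq_abs, abs_mul, abs_of_nonneg hNn]
    calc (N:ℝ) * |∑' n : ℕ, Real.cos ((((n + N + 1 : ℕ) : ℝ) + 1/2) * θ) /
          ((((n + N + 1 : ℕ) : ℝ) + 1/2) ^ 2 * Real.pi ^ 2)|
        ≤ (N:ℝ) * (3 * C * (1 / (((N:ℝ) + 1 + 1/2) ^ 2 * Real.pi ^ 2))) :=
          mul_le_mul_of_nonneg_left h0 hNn
      _ = (3 * C / Real.pi ^ 2) * ((N:ℝ) / (((N:ℝ) + 1 + 1/2) ^ 2)) := by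
          field_simp
      _ ≤ (3 * C / Real.pi ^ 2) * (1 / ((N:ℝ) + 1)) := by
          apply mul_le_mul_of_nonneg_left _ (div_nonneg (by linarith) (by positivity))
          rw [div_le_div_iff₀ (by positivity) (by positivity)]
          nlinarith
  · have := tendsto_one_div_add_atTop_nhds_zero_nat.const_mul (3 * C / Real.pi ^ 2)
    simpa using this


lemma summable_cos (N : ℕ) (θ : ℝ) :
    Summable (fun n : ℕ => Real.cos ((((n + N + 1 : ℕ) : ℝ) + 1/2) * θ) /
      ((((n + N + 1 : ℕ) : ℝ) + 1/2) ^ 2 * Real.pi ^ 2)) :=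
  summable_bound _ (fun n => term_bound N n _ (Real.abs_cos_le_one _))

lemma tail_cos_zero_arg :
    Tendsto (fun N : ℕ => (N : ℝ) * ∑' n : ℕ,
      Real.cos ((((n + N + 1 : ℕ) : ℝ) + 1/2) * 0) /
        ((((n + N + 1 : ℕ) : ℝ) + 1/2) ^ 2 * Real.pi ^ 2)) atTop (𝓝 (1 / Real.pi ^ 2)) := by
  have he : (fun N : ℕ => (N : ℝ) * ∑' n : ℕ,
      Real.cos ((((n + N + 1 : ℕ) : ℝ) + 1/2) * 0) /
        ((((n + N + 1 : ℕ) : ℝ) + 1/2) ^ 2 * Real.pi ^ 2))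
      = fun N : ℕ => (N : ℝ) * ∑' n : ℕ,
        1 / ((((n + N + 1 : ℕ) : ℝ) + 1/2) ^ 2 * Real.pi ^ 2) := by
    funext N
    congr 1
    exact tsum_congr fun n => by simp
  rw [he]
  exact tail_one

lemma tail_cos_two_pi :
    Tendsto (fun N : ℕ => (N : ℝ) * ∑' n : ℕ,
      Real.cos ((((n + N + 1 : ℕ) : ℝ) + 1/2) * (2 * Real.pi)) /
        ((((n + N + 1 : ℕ) : ℝ) + 1/2) ^ 2 * Real.pi ^ 2)) atTop (𝓝 (-(1 / Real.pi ^ 2))) := by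
  have hcos : ∀ m : ℕ, Real.cos (((m : ℕ) : ℝ) + 1/2) = 0 → True := fun _ _ => trivial
  have he : (fun N : ℕ => (N : ℝ) * ∑' n : ℕ,
      Real.cos ((((n + N + 1 : ℕ) : ℝ) + 1/2) * (2 * Real.pi)) /
        ((((n + N + 1 : ℕ) : ℝ) + 1/2) ^ 2 * Real.pi ^ 2))
      = fun N : ℕ => -((N : ℝ) * ∑' n : ℕ,
        1 / ((((n + N + 1 : ℕ) : ℝ) + 1/2) ^ 2 * Real.pi ^ 2)) := by
    funext N
    rw [← mul_neg, ← tsum_neg]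
    congr 1
    apply tsum_congr
    intro n
    have h1 : ((((n + N + 1 : ℕ) : ℝ)) + 1/2) * (2 * Real.pi)
        = (((n + N + 1 : ℕ) : ℝ)) * (2 * Real.pi) + Real.pi := by ring
    rw [h1, Real.cos_add_pi, Real.cos_nat_mul_two_pi]
    ring
  rw [he]
  exact tail_one.neg

lemma sin_ne_zero_small {x : ℝ} (hx0 : x ≠ 0) (hx : |x| < Real.pi) : Real.sin x ≠ 0 := by
  rcases lt_or_gt_of_ne hx0 with h | h
  · have h2 : Real.sin (-x) > 0 := by
      apply Real.sin_pos_of_pos_of_lt_pi (by linarith)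
      rw [abs_of_neg h] at hx; linarith
    rw [Real.sin_neg] at h2; intro hc; rw [hc] at h2; simp at h2
  · have h2 := Real.sin_pos_of_pos_of_lt_pi h (by rw [abs_of_pos h] at hx; linarith)
    exact ne_of_gt h2


/-- Fluctuation result for the Dirichlet–Neumann base case: asymptotic error in the
eigenfunction expansion of the Green's function `min(s,t)`. -/
theorem truncated_green_sin_half_asymptotics (s t : ℝ)
    (hs : s ∈ Set.Icc (0 : ℝ) 1) (ht : t ∈ Set.Icc (0 : ℝ) 1) :
    Tendsto
      (fun N : ℕ => (N : ℝ) *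
        ∑' n : ℕ,
          2 * Real.sin (((n + N + 1 : ℕ) + 1 / 2) * Real.pi * s) *
            Real.sin (((n + N + 1 : ℕ) + 1 / 2) * Real.pi * t) /
            (((n + N + 1 : ℕ) + 1 / 2) ^ 2 * Real.pi ^ 2))
      atTop
      (nhds (if s = t then
          (if t = 1 then 2 / Real.pi ^ 2
            else if 0 < t ∧ t < 1 then 1 / Real.pi ^ 2 else 0)
        else 0)) := by
  obtain ⟨hs0, hs1⟩ := hs
  obtain ⟨ht0, ht1⟩ := ht
  have hπ : (0:ℝ) < Real.pi := Real.pi_pos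
  -- split the summand into two cosine series
  have point : ∀ (N n : ℕ),
      2 * Real.sin ((((n + N + 1 : ℕ) : ℝ) + 1/2) * Real.pi * s) *
        Real.sin ((((n + N + 1 : ℕ) : ℝ) + 1/2) * Real.pi * t) /
        ((((n + N + 1 : ℕ) : ℝ) + 1/2) ^ 2 * Real.pi ^ 2)
      = Real.cos ((((n + N + 1 : ℕ) : ℝ) + 1/2) * (Real.pi * (s - t))) /
          ((((n + N + 1 : ℕ) : ℝ) + 1/2) ^ 2 * Real.pi ^ 2)
        - Real.cos ((((n + N + 1 : ℕ) : ℝ) + 1/2) * (Real.pi * (s + t))) /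
          ((((n + N + 1 : ℕ) : ℝ) + 1/2) ^ 2 * Real.pi ^ 2) := by
    intro N n
    set A : ℝ := (((n + N + 1 : ℕ) : ℝ) + 1/2) with hA
    rw [← sub_div]
    congr 1
    rw [Real.cos_sub_cos]
    rw [show (A * (Real.pi * (s - t)) + A * (Real.pi * (s + t))) / 2 = A * Real.pi * s from by ring,
        show (A * (Real.pi * (s - t)) - A * (Real.pi * (s + t))) / 2 = -(A * Real.pi * t) from by ring,
        Real.sin_neg]
    ring
  have hsplit : (fun N : ℕ => (N : ℝ) *
        ∑' n : ℕ,
          2 * Real.sin ((((n + N + 1 : ℕ) : ℝ) + 1 / 2) * Real.pi * s) *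
            Real.sin ((((n + N + 1 : ℕ) : ℝ) + 1 / 2) * Real.pi * t) /
            ((((n + N + 1 : ℕ) : ℝ) + 1 / 2) ^ 2 * Real.pi ^ 2))
      = fun N : ℕ =>
        (N : ℝ) * ∑' n : ℕ, Real.cos ((((n + N + 1 : ℕ) : ℝ) + 1/2) * (Real.pi * (s - t))) /
          ((((n + N + 1 : ℕ) : ℝ) + 1/2) ^ 2 * Real.pi ^ 2)
        - (N : ℝ) * ∑' n : ℕ, Real.cos ((((n + N + 1 : ℕ) : ℝ) + 1/2) * (Real.pi * (s + t))) /
          ((((n + N + 1 : ℕ) : ℝ) + 1/2) ^ 2 * Real.pi ^ 2) := by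
    funext N
    rw [tsum_congr (point N), Summable.tsum_sub (summable_cos N _) (summable_cos N _), mul_sub]
  rw [hsplit]
  -- first series limit
  by_cases hst : s = t
  · subst hst
    have H1 : Tendsto (fun N : ℕ =>
        (N : ℝ) * ∑' n : ℕ, Real.cos ((((n + N + 1 : ℕ) : ℝ) + 1/2) * (Real.pi * (s - s))) /
          ((((n + N + 1 : ℕ) : ℝ) + 1/2) ^ 2 * Real.pi ^ 2)) atTop (𝓝 (1 / Real.pi ^ 2)) := by
      rw [show Real.pi * (s - s) = 0 from by ring]
      exact tail_cos_zero_arg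
    by_cases ht1 : s = 1
    · subst ht1
      have H2 : Tendsto (fun N : ℕ =>
          (N : ℝ) * ∑' n : ℕ, Real.cos ((((n + N + 1 : ℕ) : ℝ) + 1/2) * (Real.pi * ((1:ℝ) + 1))) /
            ((((n + N + 1 : ℕ) : ℝ) + 1/2) ^ 2 * Real.pi ^ 2)) atTop (𝓝 (-(1 / Real.pi ^ 2))) := by
        rw [show Real.pi * ((1:ℝ) + 1) = 2 * Real.pi from by ring]
        exact tail_cos_two_pi
      have := H1.sub H2
      simp only [if_pos rfl]
      convert this using 2
      norm_num
      ring
    · by_cases ht0 : s = 0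
      · subst ht0
        have H2 : Tendsto (fun N : ℕ =>
            (N : ℝ) * ∑' n : ℕ, Real.cos ((((n + N + 1 : ℕ) : ℝ) + 1/2) * (Real.pi * ((0:ℝ) + 0))) /
              ((((n + N + 1 : ℕ) : ℝ) + 1/2) ^ 2 * Real.pi ^ 2)) atTop (𝓝 (1 / Real.pi ^ 2)) := by
          rw [show Real.pi * ((0:ℝ) + 0) = 0 from by ring]
          exact tail_cos_zero_arg
        have := H1.sub H2
        rw [if_pos rfl, if_neg (show ¬((0:ℝ) = 1) by norm_num),
          if_neg (show ¬((0:ℝ) < 0 ∧ (0:ℝ) < 1) by norm_num)]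
        simpa using this
      · -- 0 < s < 1
        have hlt0 : 0 < s := lt_of_le_of_ne hs0 (Ne.symm ht0)
        have hlt1 : s < 1 := lt_of_le_of_ne hs1 ht1
        have H2 : Tendsto (fun N : ℕ =>
            (N : ℝ) * ∑' n : ℕ, Real.cos ((((n + N + 1 : ℕ) : ℝ) + 1/2) * (Real.pi * (s + s))) /
              ((((n + N + 1 : ℕ) : ℝ) + 1/2) ^ 2 * Real.pi ^ 2)) atTop (𝓝 0) := by
          apply tail_cos
          rw [show Real.pi * (s + s) / 2 = Real.pi * s from by ring]
          exact ne_of_gt (Real.sin_pos_of_pos_of_lt_pi (by positivity) (by nlinarith))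
        have := H1.sub H2
        rw [if_pos rfl, if_neg ht1, if_pos ⟨hlt0, hlt1⟩]
        simpa using this
  · -- s ≠ t
    have habs : |s - t| ≤ 1 := abs_le.2 ⟨by linarith, by linarith⟩
    have H1 : Tendsto (fun N : ℕ =>
        (N : ℝ) * ∑' n : ℕ, Real.cos ((((n + N + 1 : ℕ) : ℝ) + 1/2) * (Real.pi * (s - t))) /
          ((((n + N + 1 : ℕ) : ℝ) + 1/2) ^ 2 * Real.pi ^ 2)) atTop (𝓝 0) := by
      apply tail_cos
      apply sin_ne_zero_small
      · intro hc
        apply hst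
        have h2 : Real.pi * (s - t) = 0 := by linarith
        rcases mul_eq_zero.mp h2 with h | h
        · exact absurd h (ne_of_gt hπ)
        · linarith
      · rw [abs_div, abs_mul, abs_of_pos hπ]
        rw [show |(2:ℝ)| = 2 from by norm_num]
        nlinarith [abs_nonneg (s - t)]
    have hstpos : 0 < s + t := by
      rcases lt_or_eq_of_le (by positivity : (0:ℝ) ≤ s + t) with h | h
      · exact h
      · exfalso; apply hst; linarith
    have hstlt : s + t < 2 := by
      rcases lt_or_eq_of_le (by linarith : s + t ≤ 2) with h | h
      · exact h
      · exfalso; apply hst; linarith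
    have H2 : Tendsto (fun N : ℕ =>
        (N : ℝ) * ∑' n : ℕ, Real.cos ((((n + N + 1 : ℕ) : ℝ) + 1/2) * (Real.pi * (s + t))) /
          ((((n + N + 1 : ℕ) : ℝ) + 1/2) ^ 2 * Real.pi ^ 2)) atTop (𝓝 0) := by
      apply tail_cos
      apply ne_of_gt
      apply Real.sin_pos_of_pos_of_lt_pi
      · positivity
      · nlinarith
    rw [if_neg hst]
    simpa using H1.sub H2
end

section
/- For all x, y ∈ (−1,1), lim_{N→∞} N · Σ_{n=N+1}^∞ T_n(x)·T_n(y) / n² equals 1/2 if x = y, and equals 0 if x ≠ y. -/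
open Filter Topology

/-- The Chebyshev polynomials of the first kind. -/
noncomputable def chebyshevT : ℕ → ℝ → ℝ
  | 0 => fun _ => 1
  | 1 => fun x => x
  | (n + 2) => fun x => 2 * x * chebyshevT (n + 1) x - chebyshevT n x

section Aux
open Real Finset

lemma chebyshevT_cos (θ : ℝ) : ∀ n : ℕ, chebyshevT n (Real.cos θ) = Real.cos (n * θ) := by
  intro n
  induction n using Nat.twoStepInduction with
  | zero => simp [chebyshevT]
  | one => simp [chebyshevT]
  | more n ih2 ih1 =>
    have h1 := Real.cos_add ((n + 1) * θ) θ
    have h2 := Real.cos_sub ((n + 1) * θ) θ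
    simp only [chebyshevT, ih1, ih2]
    push_cast
    have e1 : ((n : ℝ) + 2) * θ = (n + 1) * θ + θ := by ring
    have e2 : (n : ℝ) * θ = (n + 1) * θ - θ := by ring
    rw [e1, e2, h1, h2]; ring

lemma cos_partial_bound (θ : ℝ) (hθ : Real.cos θ ≠ 1) :
    ∃ C : ℝ, 0 < C ∧ ∀ m : ℕ, |∑ i ∈ range m, Real.cos (i * θ)| ≤ C := by
  set z : ℂ := Complex.exp (θ * Complex.I) with hz
  have hz1 : z ≠ 1 := by
    intro h
    apply hθ
    have := congrArg Complex.re h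
    rwa [hz, Complex.exp_ofReal_mul_I_re] at this
  have hnorm : ‖z - 1‖ > 0 := norm_pos_iff.mpr (sub_ne_zero.mpr hz1)
  refine ⟨2 / ‖z - 1‖, by positivity, fun m => ?_⟩
  have key : ∑ i ∈ range m, Real.cos (i * θ) = (∑ i ∈ range m, z ^ i).re := by
    rw [Complex.re_sum]
    refine Finset.sum_congr rfl fun i _ => ?_
    rw [hz, ← Complex.exp_nat_mul]
    have : (i : ℂ) * (θ * Complex.I) = ((i * θ : ℝ) : ℂ) * Complex.I := by push_cast; ring
    rw [this, Complex.exp_ofReal_mul_I_re]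
  rw [key, geom_sum_eq hz1]
  calc |((z ^ m - 1) / (z - 1)).re| ≤ ‖(z ^ m - 1) / (z - 1)‖ := Complex.abs_re_le_norm _
    _ = ‖z ^ m - 1‖ / ‖z - 1‖ := by rw [norm_div]
    _ ≤ 2 / ‖z - 1‖ := by
        gcongr
        calc ‖z ^ m - 1‖ ≤ ‖z ^ m‖ + ‖(1:ℂ)‖ := norm_sub_le _ _
          _ = 2 := by
            rw [norm_pow, hz, Complex.norm_exp_ofReal_mul_I]; norm_num

lemma telescope_Ico (f : ℕ → ℝ) {A B : ℕ} (h : A ≤ B) :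
    ∑ i ∈ Ico A B, (f i - f (i + 1)) = f A - f B := by
  induction B, h using Nat.le_induction with
  | base => simp
  | succ B hAB ih =>
    rw [Finset.sum_Ico_succ_top hAB, ih]; ring

lemma abel_bound (θ C : ℝ) (hC : ∀ m : ℕ, |∑ i ∈ range m, Real.cos (i * θ)| ≤ C)
    (N M : ℕ) :
    |∑ i ∈ Ico (N + 1) M, Real.cos (i * θ) / (i : ℝ) ^ 2| ≤ 3 * C / ((N : ℝ) + 1) ^ 2 := by
  have hC0 : 0 ≤ C := le_trans (abs_nonneg _) (hC 0)
  set f : ℕ → ℝ := fun i => 1 / (i : ℝ) ^ 2 with hf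
  set g : ℕ → ℝ := fun i => Real.cos (i * θ) with hg
  have hfmono : ∀ {a b : ℕ}, 1 ≤ a → a ≤ b → f b ≤ f a := by
    intro a b ha hab
    apply one_div_le_one_div_of_le
    · positivity
    · have hab' : (a : ℝ) ≤ b := by exact_mod_cast hab
      have ha' : (0:ℝ) ≤ a := by positivity
      nlinarith
  have hfnonneg : ∀ i : ℕ, 0 ≤ f i := fun i => by positivity
  have hfN : 0 < f (N + 1) := by
    simp only [hf]; positivity
  by_cases hM : M ≤ N + 1
  · rw [Finset.Ico_eq_empty (by omega)]
    simp only [Finset.sum_empty, abs_zero]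
    positivity
  push_neg at hM
  have hsum : ∑ i ∈ Ico (N + 1) M, Real.cos (i * θ) / (i : ℝ) ^ 2
      = ∑ i ∈ Ico (N + 1) M, f i • g i := by
    refine Finset.sum_congr rfl fun i _ => ?_
    simp [hf, hg, smul_eq_mul, div_eq_mul_inv, mul_comm, one_div]
  rw [hsum, Finset.sum_Ico_by_parts f g hM]
  have hG : ∀ m : ℕ, |∑ i ∈ range m, g i| ≤ C := hC
  have h1 : |f (M - 1) • (∑ i ∈ range M, g i)| ≤ f (N + 1) * C := by
    rw [smul_eq_mul, abs_mul, abs_of_nonneg (hfnonneg _)]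
    have : f (M - 1) ≤ f (N + 1) := hfmono (by omega) (by omega)
    exact mul_le_mul this (hG M) (abs_nonneg _) (le_of_lt hfN) |>.trans le_rfl
  have h2 : |f (N + 1) • (∑ i ∈ range (N + 1), g i)| ≤ f (N + 1) * C := by
    rw [smul_eq_mul, abs_mul, abs_of_nonneg (hfnonneg _)]
    exact mul_le_mul_of_nonneg_left (hG _) (hfnonneg _)
  have h3 : |∑ i ∈ Ico (N + 1) (M - 1), (f (i + 1) - f i) • (∑ j ∈ range (i + 1), g j)|
      ≤ f (N + 1) * C := by
    calc |∑ i ∈ Ico (N + 1) (M - 1), (f (i + 1) - f i) • (∑ j ∈ range (i + 1), g j)|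
        ≤ ∑ i ∈ Ico (N + 1) (M - 1), |(f (i + 1) - f i) • (∑ j ∈ range (i + 1), g j)| :=
          Finset.abs_sum_le_sum_abs _ _
      _ ≤ ∑ i ∈ Ico (N + 1) (M - 1), (f i - f (i + 1)) * C := by
          refine Finset.sum_le_sum fun i hi => ?_
          rw [smul_eq_mul, abs_mul]
          have hi1 : N + 1 ≤ i := (Finset.mem_Ico.mp hi).1
          have hanti : f (i + 1) ≤ f i := hfmono (by omega) (by omega)
          rw [abs_of_nonpos (by linarith), neg_sub]
          exact mul_le_mul_of_nonneg_left (hG _) (by linarith)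
      _ = (f (N + 1) - f (M - 1)) * C := by rw [← Finset.sum_mul, telescope_Ico f (by omega)]
      _ ≤ f (N + 1) * C := by
          have := hfnonneg (M - 1)
          nlinarith
  calc |f (M - 1) • (∑ i ∈ range M, g i) - f (N + 1) • (∑ i ∈ range (N + 1), g i)
        - ∑ i ∈ Ico (N + 1) (M - 1), (f (i + 1) - f i) • (∑ j ∈ range (i + 1), g j)|
      ≤ |f (M - 1) • (∑ i ∈ range M, g i)| + |f (N + 1) • (∑ i ∈ range (N + 1), g i)|
        + |∑ i ∈ Ico (N + 1) (M - 1), (f (i + 1) - f i) • (∑ j ∈ range (i + 1), g j)| := by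
        exact (abs_sub _ _).trans (by gcongr; exact abs_sub _ _)
    _ ≤ f (N + 1) * C + f (N + 1) * C + f (N + 1) * C := by linarith
    _ = 3 * C / ((N : ℝ) + 1) ^ 2 := by
        simp only [hf]
        push_cast
        ring

lemma summable_inv_sq_shift (N : ℕ) : Summable (fun k : ℕ => 1 / ((k : ℝ) + N + 1) ^ 2) := by
  have h : Summable (fun k : ℕ => 1 / ((k : ℝ) + 1) ^ 2) := by
    have := (summable_nat_add_iff (f := fun n : ℕ => 1 / (n : ℝ) ^ 2) 1).mpr
      (Real.summable_one_div_nat_pow.mpr one_lt_two)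
    exact this.congr fun k => by push_cast; ring_nf
  refine h.of_nonneg_of_le (fun k => by positivity) fun k => ?_
  apply one_div_le_one_div_of_le (by positivity)
  have hN : (0:ℝ) ≤ N := Nat.cast_nonneg N
  nlinarith [Nat.cast_nonneg (α := ℝ) k]

lemma summable_shift (u : ℕ → ℝ) (hu : ∀ n : ℕ, |u n| ≤ 1) (N : ℕ) :
    Summable (fun k : ℕ => u k / ((k : ℝ) + N + 1) ^ 2) := by
  refine Summable.of_abs ((summable_inv_sq_shift N).of_nonneg_of_le
    (fun k => abs_nonneg _) fun k => ?_)
  rw [abs_div, abs_of_nonneg (by positivity : (0:ℝ) ≤ ((k : ℝ) + N + 1) ^ 2)]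
  gcongr
  exact hu k

lemma tendsto_one_div_add_const (a : ℝ) :
    Tendsto (fun m : ℕ => 1 / ((m : ℝ) + a)) atTop (nhds 0) := by
  have hat : Tendsto (fun m : ℕ => (m : ℝ) + a) atTop atTop :=
    tendsto_atTop_add_const_right _ a tendsto_natCast_atTop_atTop
  simpa only [one_div, Pi.inv_def] using hat.inv_tendsto_atTop

lemma telescope_tsum (a : ℝ) (ha : 1 ≤ a) :
    HasSum (fun k : ℕ => 1 / (((k : ℝ) + a) * ((k : ℝ) + a + 1))) (1 / a) := by
  have ha0 : 0 < a := lt_of_lt_of_le one_pos ha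
  have hsummable : Summable (fun k : ℕ => 1 / (((k : ℝ) + a) * ((k : ℝ) + a + 1))) := by
    refine (summable_inv_sq_shift 0).of_nonneg_of_le (fun k => by positivity) fun k => ?_
    apply one_div_le_one_div_of_le (by positivity)
    push_cast
    nlinarith [Nat.cast_nonneg (α := ℝ) k]
  have hpartial : Tendsto (fun m : ℕ => ∑ k ∈ range m, (1 / (((k : ℝ) + a) * ((k : ℝ) + a + 1))))
      atTop (nhds (1 / a)) := by
    have key : ∀ m : ℕ, ∑ k ∈ range m, (1 / (((k : ℝ) + a) * ((k : ℝ) + a + 1)))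
        = 1 / a - 1 / ((m : ℝ) + a) := by
      intro m
      have h0 := Finset.sum_range_sub' (fun k : ℕ => 1 / ((k : ℝ) + a)) m
      rw [show (∑ k ∈ range m, (1 / (((k : ℝ) + a) * ((k : ℝ) + a + 1))))
          = ∑ k ∈ range m, ((fun k : ℕ => 1 / ((k : ℝ) + a)) k
            - (fun k : ℕ => 1 / ((k : ℝ) + a)) (k + 1)) from
        Finset.sum_congr rfl fun k _ => by
          have h1 : (0:ℝ) < (k : ℝ) + a := by positivity
          have h2 : (0:ℝ) < (k : ℝ) + 1 + a := by positivity
          push_cast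
          rw [div_sub_div _ _ (ne_of_gt h1) (ne_of_gt h2),
            div_eq_div_iff (by positivity) (by positivity)]
          ring, h0]
      norm_num
    simp only [key]
    simpa using (tendsto_const_nhds (x := 1 / a)).sub (tendsto_one_div_add_const a)
  have h := hsummable.hasSum
  exact (tendsto_nhds_unique h.tendsto_sum_nat hpartial) ▸ h

lemma cos_tail_tendsto (θ : ℝ) (hθ : Real.cos θ ≠ 1) :
    Tendsto (fun N : ℕ => (N : ℝ) *
      ∑' k : ℕ, Real.cos (((k : ℝ) + N + 1) * θ) / ((k : ℝ) + N + 1) ^ 2)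
      atTop (nhds 0) := by
  obtain ⟨C, hC0, hC⟩ := cos_partial_bound θ hθ
  have key : ∀ N : ℕ, |∑' k : ℕ, Real.cos (((k : ℝ) + N + 1) * θ) / ((k : ℝ) + N + 1) ^ 2|
      ≤ 3 * C / ((N : ℝ) + 1) ^ 2 := by
    intro N
    have hs : Summable (fun k : ℕ => Real.cos (((k : ℝ) + N + 1) * θ) / ((k : ℝ) + N + 1) ^ 2) :=
      summable_shift _ (fun n => Real.abs_cos_le_one _) N
    have habs := hs.hasSum.tendsto_sum_nat.abs
    refine le_of_tendsto habs (Eventually.of_forall fun m => ?_)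
    have hre : ∑ k ∈ range m, Real.cos (((k : ℝ) + N + 1) * θ) / ((k : ℝ) + N + 1) ^ 2
        = ∑ i ∈ Ico (N + 1) (N + 1 + m), Real.cos ((i : ℝ) * θ) / (i : ℝ) ^ 2 := by
      rw [Finset.sum_Ico_eq_sum_range]
      simp only [Nat.add_sub_cancel_left]
      refine Finset.sum_congr rfl fun k _ => ?_
      push_cast
      ring_nf
    rw [hre]
    exact abel_bound θ C hC N (N + 1 + m)
  have hbd : ∀ N : ℕ, ‖(N : ℝ) *
      ∑' k : ℕ, Real.cos (((k : ℝ) + N + 1) * θ) / ((k : ℝ) + N + 1) ^ 2‖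
      ≤ 3 * C / ((N : ℝ) + 1) := by
    intro N
    have hN0 : (0:ℝ) ≤ (N : ℝ) := Nat.cast_nonneg N
    have hN1 : (0:ℝ) < (N : ℝ) + 1 := by positivity
    calc ‖(N : ℝ) * ∑' k : ℕ, Real.cos (((k : ℝ) + N + 1) * θ) / ((k : ℝ) + N + 1) ^ 2‖
        = (N : ℝ) * |∑' k : ℕ, Real.cos (((k : ℝ) + N + 1) * θ) / ((k : ℝ) + N + 1) ^ 2| := by
          rw [Real.norm_eq_abs, abs_mul, abs_of_nonneg hN0]
      _ ≤ (N : ℝ) * (3 * C / ((N : ℝ) + 1) ^ 2) := by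
          exact mul_le_mul_of_nonneg_left (key N) hN0
      _ ≤ 3 * C / ((N : ℝ) + 1) := by
          rw [mul_div_assoc', div_le_div_iff₀ (by positivity) hN1]
          nlinarith
  have hg : Tendsto (fun N : ℕ => 3 * C / ((N : ℝ) + 1)) atTop (nhds 0) := by
    have := (tendsto_one_div_add_const (1 : ℝ)).const_mul (3 * C)
    simpa [mul_one_div, div_eq_mul_inv] using this
  exact squeeze_zero_norm hbd hg

lemma one_tail_tendsto :
    Tendsto (fun N : ℕ => (N : ℝ) * ∑' k : ℕ, 1 / ((k : ℝ) + N + 1) ^ 2)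
      atTop (nhds 1) := by
  have hlow : ∀ N : ℕ, 1 / ((N : ℝ) + 1) ≤ ∑' k : ℕ, 1 / ((k : ℝ) + N + 1) ^ 2 := by
    intro N
    have h1 := telescope_tsum ((N : ℝ) + 1) (by linarith [Nat.cast_nonneg (α := ℝ) N])
    rw [← h1.tsum_eq]
    refine Summable.tsum_le_tsum (fun k => ?_) h1.summable (summable_inv_sq_shift N)
    apply one_div_le_one_div_of_le (by positivity)
    nlinarith [Nat.cast_nonneg (α := ℝ) k, Nat.cast_nonneg (α := ℝ) N]
  have hup : ∀ N : ℕ, 1 ≤ N → ∑' k : ℕ, 1 / ((k : ℝ) + N + 1) ^ 2 ≤ 1 / (N : ℝ) := by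
    intro N hN
    have hN' : (1:ℝ) ≤ (N : ℝ) := by exact_mod_cast hN
    have h1 := telescope_tsum (N : ℝ) hN'
    rw [← h1.tsum_eq]
    refine Summable.tsum_le_tsum (fun k => ?_) (summable_inv_sq_shift N) h1.summable
    apply one_div_le_one_div_of_le (by positivity)
    nlinarith [Nat.cast_nonneg (α := ℝ) k]
  have hlowt : Tendsto (fun N : ℕ => (N : ℝ) / ((N : ℝ) + 1)) atTop (nhds 1) := by
    have h := (tendsto_const_nhds (x := (1:ℝ))).sub (tendsto_one_div_add_const 1)
    rw [sub_zero] at h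
    refine h.congr fun N => ?_
    have : (0:ℝ) < (N : ℝ) + 1 := by positivity
    field_simp
    ring
  refine tendsto_of_tendsto_of_tendsto_of_le_of_le' hlowt tendsto_const_nhds ?_ ?_
  · filter_upwards [eventually_ge_atTop 1] with N hN
    have hN0 : (0:ℝ) ≤ (N : ℝ) := Nat.cast_nonneg N
    calc (N : ℝ) / ((N : ℝ) + 1) = (N : ℝ) * (1 / ((N : ℝ) + 1)) := by ring
      _ ≤ (N : ℝ) * ∑' k : ℕ, 1 / ((k : ℝ) + N + 1) ^ 2 :=
        mul_le_mul_of_nonneg_left (hlow N) hN0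
  · filter_upwards [eventually_ge_atTop 1] with N hN
    have hN0 : (0:ℝ) < (N : ℝ) := by exact_mod_cast hN
    calc (N : ℝ) * ∑' k : ℕ, 1 / ((k : ℝ) + N + 1) ^ 2
        ≤ (N : ℝ) * (1 / (N : ℝ)) := mul_le_mul_of_nonneg_left (hup N hN) hN0.le
      _ = 1 := by field_simp

lemma cos_ne_one_of_ne_zero {θ : ℝ} (h0 : θ ≠ 0) (h2 : |θ| < 2 * Real.pi) :
    Real.cos θ ≠ 1 := by
  obtain ⟨hl, hr⟩ := abs_lt.mp h2
  intro h
  exact h0 ((Real.cos_eq_one_iff_of_lt_of_lt hl hr).mp h)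

end Aux

/-- Asymptotic error in the eigenfunction expansion of the Green's function associated
with the Chebyshev polynomials of the first kind. -/
theorem truncated_green_chebyshevT_asymptotics (x y : ℝ)
    (hx : x ∈ Set.Ioo (-1 : ℝ) 1) (hy : y ∈ Set.Ioo (-1 : ℝ) 1) :
    Tendsto
      (fun N : ℕ => (N : ℝ) *
        ∑' n : ℕ,
          chebyshevT (n + N + 1) x * chebyshevT (n + N + 1) y / ((n + N + 1 : ℕ) : ℝ) ^ 2)
      atTop
      (nhds (if x = y then 1 / 2 else 0)) := by
  obtain ⟨hx1, hx2⟩ := hx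
  obtain ⟨hy1, hy2⟩ := hy
  set a := Real.arccos x with hadef
  set b := Real.arccos y with hbdef
  have hxa : Real.cos a = x := Real.cos_arccos hx1.le hx2.le
  have hyb : Real.cos b = y := Real.cos_arccos hy1.le hy2.le
  have ha0 : 0 < a := Real.arccos_pos.mpr hx2
  have hapi : a < Real.pi := by
    have h := Real.neg_pi_div_two_lt_arcsin.mpr hx1
    rw [hadef, Real.arccos]; linarith
  have hb0 : 0 < b := Real.arccos_pos.mpr hy2
  have hbpi : b < Real.pi := by
    have h := Real.neg_pi_div_two_lt_arcsin.mpr hy1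
    rw [hbdef, Real.arccos]; linarith
  have hterm : ∀ N n : ℕ,
      chebyshevT (n + N + 1) x * chebyshevT (n + N + 1) y / ((n + N + 1 : ℕ) : ℝ) ^ 2
      = 1 / 2 * (Real.cos (((n : ℝ) + N + 1) * (a - b)) / ((n : ℝ) + N + 1) ^ 2)
        + 1 / 2 * (Real.cos (((n : ℝ) + N + 1) * (a + b)) / ((n : ℝ) + N + 1) ^ 2) := by
    intro N n
    rw [← hxa, ← hyb, chebyshevT_cos, chebyshevT_cos]
    have hc : ((n + N + 1 : ℕ) : ℝ) = (n : ℝ) + N + 1 := by push_cast; ring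
    rw [hc]
    set m : ℝ := (n : ℝ) + N + 1 with hm
    have key : Real.cos (m * a) * Real.cos (m * b)
        = (Real.cos (m * (a - b)) + Real.cos (m * (a + b))) / 2 := by
      have e1 : m * (a - b) = m * a - m * b := by ring
      have e2 : m * (a + b) = m * a + m * b := by ring
      rw [e1, e2, Real.cos_sub, Real.cos_add]; ring
    rw [key]; ring
  have hs1 : ∀ N : ℕ,
      Summable (fun n : ℕ => Real.cos (((n : ℝ) + N + 1) * (a - b)) / ((n : ℝ) + N + 1) ^ 2) :=
    fun N => summable_shift _ (fun n => Real.abs_cos_le_one _) N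
  have hs2 : ∀ N : ℕ,
      Summable (fun n : ℕ => Real.cos (((n : ℝ) + N + 1) * (a + b)) / ((n : ℝ) + N + 1) ^ 2) :=
    fun N => summable_shift _ (fun n => Real.abs_cos_le_one _) N
  have hfun : ∀ N : ℕ,
      (N : ℝ) * ∑' n : ℕ,
        chebyshevT (n + N + 1) x * chebyshevT (n + N + 1) y / ((n + N + 1 : ℕ) : ℝ) ^ 2
      = 1 / 2 * ((N : ℝ) *
          ∑' n : ℕ, Real.cos (((n : ℝ) + N + 1) * (a - b)) / ((n : ℝ) + N + 1) ^ 2)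
        + 1 / 2 * ((N : ℝ) *
          ∑' n : ℕ, Real.cos (((n : ℝ) + N + 1) * (a + b)) / ((n : ℝ) + N + 1) ^ 2) := by
    intro N
    rw [tsum_congr (hterm N), Summable.tsum_add ((hs1 N).mul_left _) ((hs2 N).mul_left _),
      tsum_mul_left, tsum_mul_left]
    ring
  refine Tendsto.congr (fun N => (hfun N).symm) ?_
  have hsum2 : Real.cos (a + b) ≠ 1 := by
    apply cos_ne_one_of_ne_zero (by positivity)
    rw [abs_of_pos (by positivity)]
    linarith
  have t2 : Tendsto (fun N : ℕ => (N : ℝ) *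
      ∑' n : ℕ, Real.cos (((n : ℝ) + N + 1) * (a + b)) / ((n : ℝ) + N + 1) ^ 2)
      atTop (nhds 0) := cos_tail_tendsto (a + b) hsum2
  by_cases hxy : x = y
  · have hab : a = b := by rw [hadef, hbdef, hxy]
    have hz : a - b = 0 := by rw [hab, sub_self]
    have t1 : Tendsto (fun N : ℕ => (N : ℝ) *
        ∑' n : ℕ, Real.cos (((n : ℝ) + N + 1) * (a - b)) / ((n : ℝ) + N + 1) ^ 2)
        atTop (nhds 1) := by
      simp only [hz, mul_zero, Real.cos_zero]
      exact one_tail_tendsto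
    rw [if_pos hxy]
    have := (t1.const_mul (1 / 2 : ℝ)).add (t2.const_mul (1 / 2 : ℝ))
    norm_num at this ⊢
    convert this using 2
  · have hab : a ≠ b := fun h => hxy (by rw [← hxa, ← hyb, h])
    have hsum1 : Real.cos (a - b) ≠ 1 := by
      apply cos_ne_one_of_ne_zero (sub_ne_zero.mpr hab)
      have hpi : 0 < Real.pi := Real.pi_pos
      rw [abs_lt]
      constructor <;> linarith
    have t1 := cos_tail_tendsto (a - b) hsum1
    rw [if_neg hxy]
    have := (t1.const_mul (1 / 2 : ℝ)).add (t2.const_mul (1 / 2 : ℝ))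
    norm_num at this ⊢
    convert this using 2
end

section
/- Let I = (a,b) ⊆ ℝ, let Q be a real polynomial of degree at most 2, positive on I, and L a real polynomial of degree at most 1. Let R : I → ℝ be positive and differentiable with Q(x)R'(x) = L(x)R(x) on I, and set P = R and W = R/Q. Fix a constant c ∈ ℝ and define for k ∈ ℕ the weighted moments m̃_k = c · ∫_I x^k W(x)² / √(P(x)W(x)) dx = c · ∫_I x^k R(x)/Q(x)^{3/2} dx, assuming these integrals converge absolutely. If for every l ∈ ℕ, lim_{x→b} x^{l+1}R(x)/√(Q(x)) − lim_{x→a} x^{l+1}R(x)/√(Q(x)) = 0 (both limits existing), then for every k ∈ ℕ: (k+1)·Q(0)·m̃_k + (L(0) + (k+1/2)·Q'(0))·m̃_{k+1} + (L'(0) + (k/2)·Q''(0))·m̃_{k+2} = 0. -/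
open Filter Topology MeasureTheory Polynomial

/-- The filter of approach to the (possibly infinite) endpoint `c` of an interval `I ⊆ ℝ`
from within `I`. -/
noncomputable def endpointFilter (c : EReal) (I : Set ℝ) : Filter ℝ :=
  Filter.comap (fun x : ℝ => (x : EReal)) (nhds c) ⊓ Filter.principal I

private lemma le_endpointFilter_coe {c : ℝ} {I : Set ℝ} {l : Filter ℝ}
    (hl : l ≤ 𝓝 c) (hI : I ∈ l) : l ≤ endpointFilter (c : EReal) I :=
  le_inf (Filter.tendsto_iff_comap.mp
    ((continuous_coe_real_ereal.tendsto c).mono_left hl)) (Filter.le_principal_iff.mpr hI)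

private lemma atTop_le_endpointFilter {I : Set ℝ} (hI : I ∈ (atTop : Filter ℝ)) :
    (atTop : Filter ℝ) ≤ endpointFilter ⊤ I := by
  refine le_inf (Filter.tendsto_iff_comap.mp ?_) (Filter.le_principal_iff.mpr hI)
  rw [EReal.tendsto_nhds_top_iff_real]
  intro x
  filter_upwards [eventually_gt_atTop x] with y hy
  exact_mod_cast hy

private lemma atBot_le_endpointFilter {I : Set ℝ} (hI : I ∈ (atBot : Filter ℝ)) :
    (atBot : Filter ℝ) ≤ endpointFilter ⊥ I := by
  refine le_inf (Filter.tendsto_iff_comap.mp ?_) (Filter.le_principal_iff.mpr hI)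
  rw [EReal.tendsto_nhds_bot_iff_real]
  intro x
  filter_upwards [eventually_lt_atBot x] with y hy
  exact_mod_cast hy

private lemma ftc_Ioo {f f' : ℝ → ℝ} {m b La Lb : ℝ} (hmb : m < b)
    (hderiv : ∀ x ∈ Set.Ioo m b, HasDerivAt f (f' x) x)
    (hint : IntegrableOn f' (Set.Ioo m b))
    (ha : Tendsto f (𝓝[>] m) (𝓝 La)) (hb : Tendsto f (𝓝[<] b) (𝓝 Lb)) :
    ∫ x in Set.Ioo m b, f' x = Lb - La := by
  rw [← integral_Ioc_eq_integral_Ioo, ← intervalIntegral.integral_of_le hmb.le]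
  exact intervalIntegral.integral_eq_sub_of_hasDerivAt_of_tendsto hmb hderiv
    ((intervalIntegrable_iff_integrableOn_Ioo_of_le hmb.le).mpr hint) ha hb

private lemma ftc_open (a b : EReal) (hab : a < b) {I : Set ℝ}
    (hI : I = {x : ℝ | a < (x : EReal) ∧ (x : EReal) < b})
    {f f' : ℝ → ℝ} (hderiv : ∀ x ∈ I, HasDerivAt f (f' x) x)
    (hint : IntegrableOn f' I) {Lb La : ℝ}
    (hb : Tendsto f (endpointFilter b I) (𝓝 Lb))
    (ha : Tendsto f (endpointFilter a I) (𝓝 La)) :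
    ∫ x in I, f' x = Lb - La := by
  obtain ⟨m, ham, hmb⟩ := EReal.lt_iff_exists_real_btwn.mp hab
  rcases eq_or_ne a ⊥ with rfl | hA
  · rcases eq_or_ne b ⊤ with rfl | hB
    · have hIu : I = Set.univ := by
        rw [hI]; ext x; simp [EReal.bot_lt_coe, EReal.coe_lt_top]
      subst hIu
      rw [setIntegral_univ]
      exact integral_of_hasDerivAt_of_tendsto (fun x => hderiv x trivial)
        (integrableOn_univ.mp hint)
        (ha.mono_left (atBot_le_endpointFilter Filter.univ_mem))
        (hb.mono_left (atTop_le_endpointFilter Filter.univ_mem))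
    · lift b to ℝ using ⟨hB, (ham.trans hmb).ne_bot⟩ with b'
      have hmb' : m < b' := EReal.coe_lt_coe_iff.mp hmb
      have hId : I = Set.Iio b' := by
        rw [hI]; ext x; simp [EReal.bot_lt_coe, EReal.coe_lt_coe_iff]
      subst hId
      rw [← Set.Iic_union_Ioo_eq_Iio hmb',
        setIntegral_union ((Set.Iic_disjoint_Ioi (le_refl m)).mono_right
            Set.Ioo_subset_Ioi_self)
          measurableSet_Ioo
          (hint.mono_set (Set.Iic_subset_Iio.mpr hmb'))
          (hint.mono_set Set.Ioo_subset_Iio_self)]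
      have h1 : ∫ x in Set.Iic m, f' x = f m - La := by
        refine integral_Iic_of_hasDerivAt_of_tendsto'
          (fun x hx => hderiv x (lt_of_le_of_lt hx hmb'))
          (hint.mono_set (Set.Iic_subset_Iio.mpr hmb'))
          (ha.mono_left (atBot_le_endpointFilter (Filter.Iio_mem_atBot b')))
      have h2 : ∫ x in Set.Ioo m b', f' x = Lb - f m := by
        refine ftc_Ioo hmb' (fun x hx => hderiv x hx.2)
          (hint.mono_set Set.Ioo_subset_Iio_self)
          (((hderiv m hmb').continuousAt.tendsto).mono_left nhdsWithin_le_nhds)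
          (hb.mono_left (le_endpointFilter_coe nhdsWithin_le_nhds self_mem_nhdsWithin))
      rw [h1, h2]; ring
  · lift a to ℝ using ⟨(hab.trans_le le_top).ne, hA⟩ with a'
    have ham' : a' < m := EReal.coe_lt_coe_iff.mp ham
    rcases eq_or_ne b ⊤ with rfl | hB
    · have hId : I = Set.Ioi a' := by
        rw [hI]; ext x; simp [EReal.coe_lt_top, EReal.coe_lt_coe_iff]
      subst hId
      rw [← Set.Ioo_union_Ici_eq_Ioi ham',
        setIntegral_union ((Set.Iio_disjoint_Ici (le_refl m)).mono_left
            Set.Ioo_subset_Iio_self)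
          measurableSet_Ici
          (hint.mono_set Set.Ioo_subset_Ioi_self)
          (hint.mono_set (Set.Ici_subset_Ioi.mpr ham'))]
      have h1 : ∫ x in Set.Ioo a' m, f' x = f m - La := by
        refine ftc_Ioo ham' (fun x hx => hderiv x hx.1)
          (hint.mono_set Set.Ioo_subset_Ioi_self)
          (ha.mono_left (le_endpointFilter_coe nhdsWithin_le_nhds self_mem_nhdsWithin))
          (((hderiv m ham').continuousAt.tendsto).mono_left nhdsWithin_le_nhds)
      have h2 : ∫ x in Set.Ici m, f' x = Lb - f m := by
        rw [integral_Ici_eq_integral_Ioi]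
        exact integral_Ioi_of_hasDerivAt_of_tendsto'
          (fun x hx => hderiv x (lt_of_lt_of_le ham' hx))
          (hint.mono_set (Set.Ioi_subset_Ioi ham'.le))
          (hb.mono_left (atTop_le_endpointFilter (Filter.Ioi_mem_atTop a')))
      rw [h1, h2]; ring
    · lift b to ℝ using ⟨hB, (ham.trans hmb).ne_bot⟩ with b'
      have hab' : a' < b' := EReal.coe_lt_coe_iff.mp hab
      have hId : I = Set.Ioo a' b' := by
        rw [hI]; ext x; simp [EReal.coe_lt_coe_iff, Set.mem_Ioo]
      subst hId
      exact ftc_Ioo hab' hderiv hint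
        (ha.mono_left (le_endpointFilter_coe nhdsWithin_le_nhds
          (Ioo_mem_nhdsGT_of_mem ⟨le_rfl, hab'⟩)))
        (hb.mono_left (le_endpointFilter_coe nhdsWithin_le_nhds
          (Ioo_mem_nhdsLT_of_mem ⟨hab', le_rfl⟩)))

/-- The weighted moments of `1/√(PW)` satisfy the limit-moment recurrence relation,
provided the boundary terms `x^{l+1} R/√Q` vanish between the endpoints. -/
theorem weighted_moments_recurrence
    (a b : EReal) (hab : a < b)
    (I : Set ℝ) (hI : I = {x : ℝ | a < (x : EReal) ∧ (x : EReal) < b})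
    (Q L : Polynomial ℝ) (hQdeg : Q.natDegree ≤ 2) (hLdeg : L.natDegree ≤ 1)
    (hQpos : ∀ x ∈ I, 0 < Q.eval x)
    (R : ℝ → ℝ) (hRpos : ∀ x ∈ I, 0 < R x)
    (hRdiff : ∀ x ∈ I, DifferentiableAt ℝ R x)
    (hR : ∀ x ∈ I, Q.eval x * deriv R x = L.eval x * R x)
    (c : ℝ)
    (hint : ∀ k : ℕ,
      IntegrableOn (fun x : ℝ => x ^ k * R x / Q.eval x ^ ((3 : ℝ) / 2)) I)
    (hbc : ∀ l : ℕ, ∃ Lb La : ℝ,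
      Tendsto (fun x : ℝ => x ^ (l + 1) * R x / Real.sqrt (Q.eval x))
        (endpointFilter b I) (nhds Lb) ∧
      Tendsto (fun x : ℝ => x ^ (l + 1) * R x / Real.sqrt (Q.eval x))
        (endpointFilter a I) (nhds La) ∧
      Lb - La = 0)
    (mt : ℕ → ℝ)
    (hmt : ∀ k : ℕ, mt k = c * ∫ x in I, x ^ k * R x / Q.eval x ^ ((3 : ℝ) / 2)) :
    ∀ k : ℕ,
      ((k : ℝ) + 1) * Q.eval 0 * mt k +
        (L.eval 0 + ((k : ℝ) + 1 / 2) * (derivative Q).eval 0) * mt (k + 1) +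
        ((derivative L).eval 0 + (k : ℝ) / 2 * (derivative (derivative Q)).eval 0) *
          mt (k + 2) = 0 := by
  intro k
  have hQ0 : Q.eval 0 = Q.coeff 0 := (Polynomial.coeff_zero_eq_eval_zero Q).symm
  have hL0 : L.eval 0 = L.coeff 0 := (Polynomial.coeff_zero_eq_eval_zero L).symm
  have hQ'0 : (derivative Q).eval 0 = Q.coeff 1 := by
    rw [← Polynomial.coeff_zero_eq_eval_zero, Polynomial.coeff_derivative]; norm_num
  have hQ''0 : (derivative (derivative Q)).eval 0 = 2 * Q.coeff 2 := by
    rw [← Polynomial.coeff_zero_eq_eval_zero, Polynomial.coeff_derivative,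
      Polynomial.coeff_derivative]
    push_cast; ring
  have hL'0 : (derivative L).eval 0 = L.coeff 1 := by
    rw [← Polynomial.coeff_zero_eq_eval_zero, Polynomial.coeff_derivative]; norm_num
  set A : ℝ := ((k : ℝ) + 1) * Q.coeff 0 with hAdef
  set B : ℝ := L.coeff 0 + ((k : ℝ) + 1 / 2) * Q.coeff 1 with hBdef
  set C : ℝ := L.coeff 1 + (k : ℝ) * Q.coeff 2 with hCdef
  obtain ⟨Lb, La, hbT, haT, hdiff0⟩ := hbc k
  -- the key pointwise derivative computation
  have key : ∀ x ∈ I, HasDerivAt (fun y : ℝ => y ^ (k + 1) * R y / Real.sqrt (Q.eval y))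
      (A * (x ^ k * R x / Q.eval x ^ ((3 : ℝ) / 2))
        + B * (x ^ (k + 1) * R x / Q.eval x ^ ((3 : ℝ) / 2))
        + C * (x ^ (k + 2) * R x / Q.eval x ^ ((3 : ℝ) / 2))) x := by
    intro x hx
    have hq : 0 < Q.eval x := hQpos x hx
    have hQx : Q.eval x = Q.coeff 0 + Q.coeff 1 * x + Q.coeff 2 * x ^ 2 := by
      rw [Polynomial.eval_eq_sum_range' (lt_of_le_of_lt hQdeg (by norm_num : (2 : ℕ) < 3)),
        Finset.sum_range_succ, Finset.sum_range_succ, Finset.sum_range_one]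
      ring
    have hQ'x : (derivative Q).eval x = Q.coeff 1 + 2 * Q.coeff 2 * x := by
      have h : (derivative Q).natDegree < 2 :=
        lt_of_le_of_lt (Polynomial.natDegree_derivative_le Q) (by omega)
      rw [Polynomial.eval_eq_sum_range' h, Finset.sum_range_succ, Finset.sum_range_one,
        Polynomial.coeff_derivative, Polynomial.coeff_derivative]
      push_cast; ring
    have hLx : L.eval x = L.coeff 0 + L.coeff 1 * x := by
      rw [Polynomial.eval_eq_sum_range' (lt_of_le_of_lt hLdeg (by norm_num : (1 : ℕ) < 2)),
        Finset.sum_range_succ, Finset.sum_range_one]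
      ring
    have hs : 0 < Real.sqrt (Q.eval x) := Real.sqrt_pos.2 hq
    have hs2 : Real.sqrt (Q.eval x) ^ 2 = Q.eval x := Real.sq_sqrt hq.le
    have hsq : HasDerivAt (fun y => Real.sqrt (Q.eval y))
        (1 / (2 * Real.sqrt (Q.eval x)) * (derivative Q).eval x) x :=
      (Real.hasDerivAt_sqrt hq.ne').comp x (Q.hasDerivAt x)
    have hnum : HasDerivAt (fun y : ℝ => y ^ (k + 1) * R y)
        (((k : ℝ) + 1) * x ^ k * R x + x ^ (k + 1) * deriv R x) x := by
      have := (hasDerivAt_pow (k + 1) x).mul (hRdiff x hx).hasDerivAt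
      refine this.congr_deriv ?_
      push_cast
      ring
    have hF := hnum.div hsq hs.ne'
    refine hF.congr_deriv ?_
    symm
    have hRx : deriv R x = L.eval x * R x / Q.eval x := by
      field_simp
      linarith [hR x hx]
    have h32 : Q.eval x ^ ((3 : ℝ) / 2) = Q.eval x * Real.sqrt (Q.eval x) := by
      rw [show (3 : ℝ) / 2 = 1 + 1 / 2 by norm_num, Real.rpow_add hq, Real.rpow_one,
        Real.sqrt_eq_rpow]
    rw [hRx, h32, hQ'x, hLx, hAdef, hBdef, hCdef]
    have hq' : Q.eval x ≠ 0 := hq.ne'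
    have hs' : Real.sqrt (Q.eval x) ≠ 0 := hs.ne'
    have hc0 : Q.coeff 0 = Q.eval x - Q.coeff 1 * x - Q.coeff 2 * x ^ 2 := by linarith
    rw [hc0]
    set s := Real.sqrt (Q.eval x) with hsd
    clear_value s
    rw [← hs2] at hq' ⊢
    field_simp
    ring
  -- integrate the derivative over I
  have hik : IntegrableOn (fun x : ℝ => A * (x ^ k * R x / Q.eval x ^ ((3 : ℝ) / 2))) I :=
    (hint k).const_mul A
  have hik1 : IntegrableOn (fun x : ℝ => B * (x ^ (k + 1) * R x / Q.eval x ^ ((3 : ℝ) / 2))) I :=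
    (hint (k + 1)).const_mul B
  have hik2 : IntegrableOn (fun x : ℝ => C * (x ^ (k + 2) * R x / Q.eval x ^ ((3 : ℝ) / 2))) I :=
    (hint (k + 2)).const_mul C
  have hGint : IntegrableOn (fun x : ℝ =>
      A * (x ^ k * R x / Q.eval x ^ ((3 : ℝ) / 2))
        + B * (x ^ (k + 1) * R x / Q.eval x ^ ((3 : ℝ) / 2))
        + C * (x ^ (k + 2) * R x / Q.eval x ^ ((3 : ℝ) / 2))) I :=
    (hik.add hik1).add hik2
  have hI0 : ∫ x in I,
      (A * (x ^ k * R x / Q.eval x ^ ((3 : ℝ) / 2))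
        + B * (x ^ (k + 1) * R x / Q.eval x ^ ((3 : ℝ) / 2))
        + C * (x ^ (k + 2) * R x / Q.eval x ^ ((3 : ℝ) / 2))) = Lb - La :=
    ftc_open a b hab hI key hGint hbT haT
  have hsplit : ∫ x in I,
      (A * (x ^ k * R x / Q.eval x ^ ((3 : ℝ) / 2))
        + B * (x ^ (k + 1) * R x / Q.eval x ^ ((3 : ℝ) / 2))
        + C * (x ^ (k + 2) * R x / Q.eval x ^ ((3 : ℝ) / 2)))
      = A * (∫ x in I, x ^ k * R x / Q.eval x ^ ((3 : ℝ) / 2))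
        + B * (∫ x in I, x ^ (k + 1) * R x / Q.eval x ^ ((3 : ℝ) / 2))
        + C * (∫ x in I, x ^ (k + 2) * R x / Q.eval x ^ ((3 : ℝ) / 2)) := by
    have e1 : ∫ x in I,
        (A * (x ^ k * R x / Q.eval x ^ ((3 : ℝ) / 2))
          + B * (x ^ (k + 1) * R x / Q.eval x ^ ((3 : ℝ) / 2))
          + C * (x ^ (k + 2) * R x / Q.eval x ^ ((3 : ℝ) / 2)))
        = (∫ x in I, (A * (x ^ k * R x / Q.eval x ^ ((3 : ℝ) / 2))
            + B * (x ^ (k + 1) * R x / Q.eval x ^ ((3 : ℝ) / 2))))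
          + ∫ x in I, C * (x ^ (k + 2) * R x / Q.eval x ^ ((3 : ℝ) / 2)) :=
      integral_add (hik.add hik1) hik2
    have e2 : ∫ x in I,
        (A * (x ^ k * R x / Q.eval x ^ ((3 : ℝ) / 2))
          + B * (x ^ (k + 1) * R x / Q.eval x ^ ((3 : ℝ) / 2)))
        = (∫ x in I, A * (x ^ k * R x / Q.eval x ^ ((3 : ℝ) / 2)))
          + ∫ x in I, B * (x ^ (k + 1) * R x / Q.eval x ^ ((3 : ℝ) / 2)) :=
      integral_add hik hik1
    rw [e1, e2, integral_const_mul, integral_const_mul, integral_const_mul]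
  have hsum : A * (∫ x in I, x ^ k * R x / Q.eval x ^ ((3 : ℝ) / 2))
        + B * (∫ x in I, x ^ (k + 1) * R x / Q.eval x ^ ((3 : ℝ) / 2))
        + C * (∫ x in I, x ^ (k + 2) * R x / Q.eval x ^ ((3 : ℝ) / 2)) = 0 := by
    rw [← hsplit, hI0, hdiff0]
  rw [hmt k, hmt (k + 1), hmt (k + 2), hQ0, hQ'0, hQ''0, hL0, hL'0, hAdef] at *
  linear_combination c * hsum
end

section
/- Let I ⊆ ℝ be an interval, W : I → ℝ a positive weight function, and {Y_n}_{n∈ℕ} a family of real polynomials with deg Y_n = n and leading coefficient K_n ≠ 0, pairwise orthogonal with respect to ⟨f,g⟩ = ∫_I f(x)g(x)W(x) dx, with M_n = ∫_I W(x)Y_n(x)² dx finite and positive (and all moments ∫_I x^k W(x) dx finite). Then for every n ≥ 1 there exists a real constant B_n such that for all x ∈ I: Y_{n+1}(x) = (A_n·x + B_n)·Y_n(x) − C_n·Y_{n−1}(x), where A_n = K_{n+1}/K_n and C_n = (K_{n−1}·K_{n+1}/K_n²)·(M_n/M_{n−1}). -/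
open Filter Topology Polynomial MeasureTheory

/-- Decomposition of a polynomial of degree ≤ n in the basis `Y 0, …, Y n`. -/
lemma otp_decomp (Y : ℕ → Polynomial ℝ) (hdeg : ∀ n, (Y n).natDegree = n)
    (hK : ∀ n, (Y n).coeff n ≠ 0) :
    ∀ n (p : Polynomial ℝ), p.natDegree ≤ n →
      ∃ c : ℕ → ℝ, p = ∑ k ∈ Finset.range (n + 1), Polynomial.C (c k) * Y k := by
  intro n
  induction n with
  | zero =>
    intro p hp
    refine ⟨fun _ => p.coeff 0 / (Y 0).coeff 0, ?_⟩
    simp only [zero_add, Finset.range_one, Finset.sum_singleton]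
    have h0 : Y 0 = C ((Y 0).coeff 0) := Polynomial.eq_C_of_natDegree_le_zero (le_of_eq (hdeg 0))
    have hp0 : p = C (p.coeff 0) := Polynomial.eq_C_of_natDegree_le_zero hp
    calc p = C (p.coeff 0) := hp0
      _ = C (p.coeff 0 / (Y 0).coeff 0) * C ((Y 0).coeff 0) := by
            rw [← C_mul, div_mul_cancel₀ _ (hK 0)]
      _ = C (p.coeff 0 / (Y 0).coeff 0) * Y 0 := by rw [← h0]
  | succ n ih =>
    intro p hp
    set a := p.coeff (n + 1) / (Y (n + 1)).coeff (n + 1) with ha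
    have hq : (p - C a * Y (n + 1)).natDegree ≤ n := by
      rw [Polynomial.natDegree_le_iff_coeff_eq_zero]
      intro m hm
      rw [Polynomial.coeff_sub, Polynomial.coeff_C_mul]
      rcases eq_or_lt_of_le (Nat.succ_le_of_lt hm) with h | h
      · rw [← h, ha, div_mul_cancel₀ _ (hK (n + 1)), sub_self]
      · rw [Polynomial.coeff_eq_zero_of_natDegree_lt (lt_of_le_of_lt hp h),
          Polynomial.coeff_eq_zero_of_natDegree_lt (by rw [hdeg]; exact h), mul_zero, sub_zero]
    obtain ⟨c, hc⟩ := ih _ hq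
    refine ⟨fun k => if k = n + 1 then a else c k, ?_⟩
    have hite : ∑ k ∈ Finset.range (n + 1), C (if k = n + 1 then a else c k) * Y k
        = ∑ k ∈ Finset.range (n + 1), C (c k) * Y k := by
      refine Finset.sum_congr rfl fun k hk => ?_
      have := Finset.mem_range.1 hk
      rw [if_neg (by omega)]
    rw [Finset.sum_range_succ, hite]
    simp only [eq_self_iff_true, if_true]
    rw [← hc, sub_add_cancel]

/-- Any polynomial times the weight is integrable. -/
lemma otp_integ (I : Set ℝ) (W : ℝ → ℝ)
    (hmom : ∀ k : ℕ, IntegrableOn (fun x : ℝ => x ^ k * W x) I) (q : Polynomial ℝ) :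
    IntegrableOn (fun x => q.eval x * W x) I := by
  have h : (fun x => q.eval x * W x) =
      fun x => ∑ k ∈ Finset.range (q.natDegree + 1), q.coeff k * (x ^ k * W x) := by
    funext x
    rw [q.eval_eq_sum_range, Finset.sum_mul]
    exact Finset.sum_congr rfl fun k _ => mul_assoc _ _ _
  rw [h]
  exact integrable_finset_sum _ fun k _ => (hmom k).const_mul _

lemma otp_integ2 (I : Set ℝ) (W : ℝ → ℝ)
    (hmom : ∀ k : ℕ, IntegrableOn (fun x : ℝ => x ^ k * W x) I) (q r : Polynomial ℝ) :
    IntegrableOn (fun x => q.eval x * r.eval x * W x) I := by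
  have := otp_integ I W hmom (q * r)
  simpa only [Polynomial.eval_mul, mul_assoc] using this

/-- Integral of a decomposed polynomial against `Y j`. -/
lemma otp_inner_sum (I : Set ℝ) (W : ℝ → ℝ) (Y : ℕ → Polynomial ℝ)
    (horth : ∀ m n : ℕ, m ≠ n → ∫ x in I, (Y m).eval x * (Y n).eval x * W x = 0)
    (hmom : ∀ k : ℕ, IntegrableOn (fun x : ℝ => x ^ k * W x) I)
    (m j : ℕ) (c : ℕ → ℝ) :
    ∫ x in I, (∑ k ∈ Finset.range (m + 1), Polynomial.C (c k) * Y k).eval x * (Y j).eval x * W x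
      = if j ≤ m then c j * ∫ x in I, (Y j).eval x * (Y j).eval x * W x else 0 := by
  have hpt : ∀ x : ℝ, (∑ k ∈ Finset.range (m + 1), Polynomial.C (c k) * Y k).eval x
        * (Y j).eval x * W x
      = ∑ k ∈ Finset.range (m + 1), c k * ((Y k).eval x * (Y j).eval x * W x) := by
    intro x
    rw [Polynomial.eval_finset_sum, Finset.sum_mul, Finset.sum_mul]
    refine Finset.sum_congr rfl fun k _ => ?_
    simp only [Polynomial.eval_mul, Polynomial.eval_C]
    ring
  simp_rw [hpt]
  rw [MeasureTheory.integral_finset_sum _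
    (fun k _ => ((otp_integ2 I W hmom (Y k) (Y j)).const_mul (c k)))]
  simp_rw [MeasureTheory.integral_const_mul]
  by_cases hj : j ≤ m
  · rw [if_pos hj]
    rw [Finset.sum_eq_single j]
    · intro k hk hkj
      rw [horth k j hkj, mul_zero]
    · intro h
      exact absurd (Finset.mem_range.2 (Nat.lt_succ_of_le hj)) h
  · rw [if_neg hj]
    refine Finset.sum_eq_zero fun k hk => ?_
    have : k ≠ j := by have := Finset.mem_range.1 hk; omega
    rw [horth k j this, mul_zero]

/-- A polynomial of degree ≤ m is orthogonal to `Y n` for n > m. -/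
lemma otp_orth_high (I : Set ℝ) (W : ℝ → ℝ) (Y : ℕ → Polynomial ℝ)
    (hdeg : ∀ n, (Y n).natDegree = n) (hK : ∀ n, (Y n).coeff n ≠ 0)
    (horth : ∀ m n : ℕ, m ≠ n → ∫ x in I, (Y m).eval x * (Y n).eval x * W x = 0)
    (hmom : ∀ k : ℕ, IntegrableOn (fun x : ℝ => x ^ k * W x) I)
    (m n : ℕ) (p : Polynomial ℝ) (hp : p.natDegree ≤ m) (hmn : m < n) :
    ∫ x in I, p.eval x * (Y n).eval x * W x = 0 := by
  obtain ⟨c, hc⟩ := otp_decomp Y hdeg hK m p hp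
  rw [hc, otp_inner_sum I W Y horth hmom m n c, if_neg (by omega)]


/-- Three-term recurrence for a family of orthogonal polynomials: the coefficients `Aₙ`
and `Cₙ` are determined by the leading coefficients `Kₙ` and the squared norms `Mₙ`. -/
theorem orthogonal_polynomial_three_term_recurrence
    (I : Set ℝ) (hImeas : MeasurableSet I) (hIconn : I.OrdConnected)
    (W : ℝ → ℝ) (hW : ∀ x ∈ I, 0 < W x)
    (Y : ℕ → Polynomial ℝ) (hdeg : ∀ n, (Y n).natDegree = n)
    (K : ℕ → ℝ) (hKdef : ∀ n, K n = (Y n).coeff n) (hK : ∀ n, K n ≠ 0)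
    (horth : ∀ m n : ℕ, m ≠ n → ∫ x in I, (Y m).eval x * (Y n).eval x * W x = 0)
    (M : ℕ → ℝ) (hMdef : ∀ n, M n = ∫ x in I, W x * (Y n).eval x ^ 2)
    (hMpos : ∀ n, 0 < M n) (hMfin : ∀ n, IntegrableOn (fun x => W x * (Y n).eval x ^ 2) I)
    (hmom : ∀ k : ℕ, IntegrableOn (fun x : ℝ => x ^ k * W x) I) :
    ∀ n : ℕ, 1 ≤ n → ∃ B : ℝ, ∀ x ∈ I,
      (Y (n + 1)).eval x =
        (K (n + 1) / K n * x + B) * (Y n).eval x -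
          (K (n - 1) * K (n + 1) / (K n) ^ 2 * (M n / M (n - 1))) * (Y (n - 1)).eval x := by
  intro n hn
  obtain ⟨m, rfl⟩ : ∃ m, n = m + 1 := ⟨n - 1, (Nat.succ_pred_eq_of_pos hn).symm⟩
  simp only [Nat.add_sub_cancel]
  have hKc : ∀ k, (Y k).coeff k ≠ 0 := fun k => (hKdef k) ▸ hK k
  have hIq : ∀ q r : Polynomial ℝ, IntegrableOn (fun x => q.eval x * r.eval x * W x) I :=
    otp_integ2 I W hmom
  have hXdeg : ∀ j, (Polynomial.X * Y j).natDegree ≤ j + 1 := fun j =>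
    le_trans (Polynomial.natDegree_mul_le) (by rw [Polynomial.natDegree_X, hdeg]; omega)
  have hMeq : ∀ j, (∫ x in I, (Y j).eval x * (Y j).eval x * W x) = M j := by
    intro j
    have hpt : ∀ x : ℝ, (Y j).eval x * (Y j).eval x * W x = W x * (Y j).eval x ^ 2 := by
      intro x; ring
    simp_rw [hpt]
    exact (hMdef j).symm
  set A := K (m + 1 + 1) / K (m + 1) with hA
  set p := Y (m + 1 + 1) - Polynomial.C A * (Polynomial.X * Y (m + 1)) with hpdef
  have hp : p.natDegree ≤ m + 1 := by
    rw [Polynomial.natDegree_le_iff_coeff_eq_zero]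
    intro t ht
    obtain ⟨s, rfl⟩ : ∃ s, t = s + 1 := ⟨t - 1, by omega⟩
    rw [hpdef, Polynomial.coeff_sub, Polynomial.coeff_C_mul, Polynomial.coeff_X_mul]
    rcases eq_or_lt_of_le (show m + 1 ≤ s by omega) with h | h
    · rw [← h, ← hKdef, ← hKdef, hA, div_mul_cancel₀ _ (hK (m + 1)), sub_self]
    · rw [Polynomial.coeff_eq_zero_of_natDegree_lt (by rw [hdeg]; omega),
        Polynomial.coeff_eq_zero_of_natDegree_lt (by rw [hdeg]; omega), mul_zero, sub_zero]
  obtain ⟨c, hc⟩ := otp_decomp Y hdeg hKc (m + 1) p hp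
  -- inner products of p with Y j, two ways
  have hinner : ∀ j, j ≤ m + 1 →
      (∫ x in I, p.eval x * (Y j).eval x * W x) = c j * M j := by
    intro j hj
    rw [hc, otp_inner_sum I W Y horth hmom (m + 1) j c, if_pos hj, hMeq j]
  have hinner2 : ∀ j, j ≤ m + 1 →
      (∫ x in I, p.eval x * (Y j).eval x * W x)
        = -(A * ∫ x in I, (Polynomial.X * Y j).eval x * (Y (m + 1)).eval x * W x) := by
    intro j hj
    have hpt : ∀ x : ℝ, p.eval x * (Y j).eval x * W x
        = (Y (m + 1 + 1)).eval x * (Y j).eval x * W x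
          - A * ((Polynomial.X * Y j).eval x * (Y (m + 1)).eval x * W x) := by
      intro x
      simp only [hpdef, Polynomial.eval_sub, Polynomial.eval_mul, Polynomial.eval_C,
        Polynomial.eval_X]
      ring
    simp_rw [hpt]
    rw [MeasureTheory.integral_sub (hIq (Y (m + 1 + 1)) (Y j))
        ((hIq (Polynomial.X * Y j) (Y (m + 1))).const_mul A),
      MeasureTheory.integral_const_mul, horth (m + 1 + 1) j (by omega), zero_sub]
  -- vanishing of low coefficients
  have hc0 : ∀ j, j < m → c j = 0 := by
    intro j hj
    have h1 := hinner j (by omega)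
    have h2 := hinner2 j (by omega)
    have h3 : (∫ x in I, (Polynomial.X * Y j).eval x * (Y (m + 1)).eval x * W x) = 0 :=
      otp_orth_high I W Y hdeg hKc horth hmom (j + 1) (m + 1) _ (hXdeg j) (by omega)
    have h4 : c j * M j = 0 := by rw [← h1, h2, h3, mul_zero, neg_zero]
    exact (mul_eq_zero.1 h4).resolve_right (hMpos j).ne'
  -- the coefficient c m
  have hXm : (∫ x in I, (Polynomial.X * Y m).eval x * (Y (m + 1)).eval x * W x)
      = K m / K (m + 1) * M (m + 1) := by
    set r := Polynomial.X * Y m - Polynomial.C (K m / K (m + 1)) * Y (m + 1) with hrdef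
    have hr : r.natDegree ≤ m := by
      rw [Polynomial.natDegree_le_iff_coeff_eq_zero]
      intro t ht
      obtain ⟨s, rfl⟩ : ∃ s, t = s + 1 := ⟨t - 1, by omega⟩
      rw [hrdef, Polynomial.coeff_sub, Polynomial.coeff_C_mul, Polynomial.coeff_X_mul]
      rcases eq_or_lt_of_le (show m ≤ s by omega) with h | h
      · rw [← h, ← hKdef, ← hKdef, div_mul_cancel₀ _ (hK (m + 1)), sub_self]
      · rw [Polynomial.coeff_eq_zero_of_natDegree_lt (by rw [hdeg]; omega),
          Polynomial.coeff_eq_zero_of_natDegree_lt (by rw [hdeg]; omega), mul_zero, sub_zero]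
    have hpt : ∀ x : ℝ, (Polynomial.X * Y m).eval x * (Y (m + 1)).eval x * W x
        = r.eval x * (Y (m + 1)).eval x * W x
          + K m / K (m + 1) * ((Y (m + 1)).eval x * (Y (m + 1)).eval x * W x) := by
      intro x
      simp only [hrdef, Polynomial.eval_sub, Polynomial.eval_mul, Polynomial.eval_C,
        Polynomial.eval_X]
      ring
    simp_rw [hpt]
    rw [MeasureTheory.integral_add (hIq r (Y (m + 1)))
        ((hIq (Y (m + 1)) (Y (m + 1))).const_mul _),
      MeasureTheory.integral_const_mul,
      otp_orth_high I W Y hdeg hKc horth hmom m (m + 1) r hr (by omega), hMeq (m + 1), zero_add]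
  have hcm : c m = -(K m * K (m + 1 + 1) / K (m + 1) ^ 2 * (M (m + 1) / M m)) := by
    have h1 := hinner m (by omega)
    have h2 := hinner2 m (by omega)
    rw [h1, hXm] at h2
    have hMm := (hMpos m).ne'
    have hK1 := hK (m + 1)
    have hcm' : c m = c m * M m / M m := by field_simp
    rw [hcm', h2, hA]
    ring
  refine ⟨c (m + 1), fun x hx => ?_⟩
  have hpe : p.eval x = c m * (Y m).eval x + c (m + 1) * (Y (m + 1)).eval x := by
    rw [hc, Polynomial.eval_finset_sum, Finset.sum_range_succ, Finset.sum_range_succ]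
    rw [Finset.sum_eq_zero (fun k hk => by
      rw [hc0 k (Finset.mem_range.1 hk), map_zero, zero_mul, Polynomial.eval_zero])]
    simp only [Polynomial.eval_mul, Polynomial.eval_C]
    ring
  have hYe : (Y (m + 1 + 1)).eval x
      = A * x * (Y (m + 1)).eval x + (c m * (Y m).eval x + c (m + 1) * (Y (m + 1)).eval x) := by
    rw [← hpe, hpdef]
    simp only [Polynomial.eval_sub, Polynomial.eval_mul, Polynomial.eval_C, Polynomial.eval_X]
    ring
  rw [hYe, hcm, hA]
  ring
end

section
/- Let {Y_n}_{n∈ℕ} be real polynomials with deg Y_n = n and leading coefficients K_n ≠ 0, let M_n > 0 and let λ_n be real numbers with λ_n ≠ 0 for all n ≥ 1. Assume the three-term recurrence Y_{n+1}(x) = (A_n·x + B_n)·Y_n(x) − C_n·Y_{n−1}(x) holds for all n ≥ 1 and x ∈ ℝ, where A_n = K_{n+1}/K_n, C_n = (K_{n−1}·K_{n+1}/K_n²)·(M_n/M_{n−1}), and B_n ∈ ℝ. Define D_{n+1}(x,y) = Y_{n+1}(x)Y_n(y) − Y_n(x)Y_{n+1}(y). Then for every N ≥ 1 and all x, y ∈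 ℝ: (x−y)·Σ_{n=1}^N Y_n(x)Y_n(y)/(M_n λ_n) = (K_N/(K_{N+1}M_N))·D_{N+1}(x,y)/λ_N − (K_0/(K_1 M_0))·D_1(x,y)/λ_1 + Σ_{n=1}^{N−1} (K_n/(K_{n+1}M_n))·D_{n+1}(x,y)·(1/λ_n − 1/λ_{n+1}). -/
open Filter Topology Polynomial

/-- Christoffel–Darboux type formula for a family of polynomials satisfying the standard
three-term recurrence of orthogonal polynomials, with eigenvalue weights `λₙ`. -/
theorem christoffel_darboux_type_formula
    (Y : ℕ → Polynomial ℝ) (K M lam : ℕ → ℝ)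
    (hdeg : ∀ n, (Y n).natDegree = n)
    (hlead : ∀ n, (Y n).coeff n = K n)
    (hK : ∀ n, K n ≠ 0)
    (hM : ∀ n, 0 < M n)
    (hlam : ∀ n, 1 ≤ n → lam n ≠ 0)
    (B : ℕ → ℝ)
    (hrec : ∀ n, 1 ≤ n → ∀ x : ℝ,
      (Y (n + 1)).eval x =
        (K (n + 1) / K n * x + B n) * (Y n).eval x -
          (K (n - 1) * K (n + 1) / (K n) ^ 2 * (M n / M (n - 1))) * (Y (n - 1)).eval x) :
    ∀ N : ℕ, 1 ≤ N → ∀ x y : ℝ,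
      (x - y) * ∑ n ∈ Finset.Icc 1 N, (Y n).eval x * (Y n).eval y / (M n * lam n)
        = K N / (K (N + 1) * M N) *
            (((Y (N + 1)).eval x * (Y N).eval y - (Y N).eval x * (Y (N + 1)).eval y) / lam N)
          - K 0 / (K 1 * M 0) *
              (((Y 1).eval x * (Y 0).eval y - (Y 0).eval x * (Y 1).eval y) / lam 1)
          + ∑ n ∈ Finset.Icc 1 (N - 1),
              K n / (K (n + 1) * M n) *
                ((Y (n + 1)).eval x * (Y n).eval y - (Y n).eval x * (Y (n + 1)).eval y) *
                (1 / lam n - 1 / lam (n + 1)) := by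
  intro N hN x y
  have hM' : ∀ n, M n ≠ 0 := fun n => (hM n).ne'
  have key : ∀ n, 1 ≤ n →
      (x - y) * ((Y n).eval x * (Y n).eval y / (M n * lam n))
        = K n / (K (n + 1) * M n) *
            (((Y (n + 1)).eval x * (Y n).eval y - (Y n).eval x * (Y (n + 1)).eval y) / lam n)
          - K (n - 1) / (K n * M (n - 1)) *
            (((Y n).eval x * (Y (n - 1)).eval y - (Y (n - 1)).eval x * (Y n).eval y) / lam n) := by
    rintro (_ | m) hn
    · omega
    have h1 := hrec (m + 1) (by omega) x
    have h2 := hrec (m + 1) (by omega) y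
    simp only [Nat.add_sub_cancel] at h1 h2 ⊢
    rw [h1, h2]
    have hk0 := hK m
    have hk1 := hK (m + 1)
    have hk2 := hK (m + 1 + 1)
    have hm0 := hM' m
    have hm1 := hM' (m + 1)
    have hl := hlam (m + 1) hn
    field_simp
    ring
  induction N, hN using Nat.le_induction with
  | base =>
    rw [show (1 : ℕ) - 1 = 0 from rfl]
    simp only [Finset.Icc_self, Finset.sum_singleton, Finset.Icc_eq_empty_of_lt Nat.zero_lt_one,
      Finset.sum_empty, add_zero]
    rw [key 1 le_rfl]
  | succ n hn ih =>
    obtain ⟨m, rfl⟩ : ∃ m, n = m + 1 := ⟨n - 1, by omega⟩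
    rw [Finset.sum_Icc_succ_top (by omega : 1 ≤ m + 1 + 1), mul_add, ih,
      key (m + 1 + 1) (by omega)]
    simp only [Nat.add_sub_cancel]
    rw [Finset.sum_Icc_succ_top (by omega : 1 ≤ m + 1)]
    have hl1 : lam (m + 1) ≠ 0 := hlam _ (by omega)
    have hl2 : lam (m + 1 + 1) ≠ 0 := hlam _ (by omega)
    have step : ∀ S c0 c1 c2 d0 d1 d2 l0 l1 l2 : ℝ, l1 ≠ 0 → l2 ≠ 0 →
        (c1 * (d1 / l1) - c0 * (d0 / l0) + S) + (c2 * (d2 / l2) - c1 * (d1 / l2)) =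
          c2 * (d2 / l2) - c0 * (d0 / l0) + (S + c1 * d1 * (1 / l1 - 1 / l2)) := by
      intro S c0 c1 c2 d0 d1 d2 l0 l1 l2 h1 h2
      field_simp
      ring
    exact step _ _ _ _ _ _ _ _ _ _ hl1 hl2
end

section
/- Fix α ∈ ℝ with α > −1. For every n ∈ ℕ, ∫_0^∞ x^{2α+1} e^{−2x} · L_n^{(α)}(x) · (L_n^{(α)})'(x) dx = 0. -/
open Filter Topology

/-- The associated Laguerre polynomials `L_n^{(α)}`. -/
noncomputable def assocLaguerre (α : ℝ) (n : ℕ) (x : ℝ) : ℝ :=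
  ∑ k ∈ Finset.range (n + 1),
    (-1 : ℝ) ^ k *
      (Real.Gamma ((n : ℝ) + α + 1) /
        (Real.Gamma ((k : ℝ) + α + 1) * ((n - k).factorial : ℝ) * (k.factorial : ℝ))) * x ^ k

namespace LagAux

noncomputable def c (α : ℝ) (n k : ℕ) : ℝ :=
  (-1 : ℝ) ^ k *
    (Real.Gamma ((n : ℝ) + α + 1) /
      (Real.Gamma ((k : ℝ) + α + 1) * ((n - k).factorial : ℝ) * (k.factorial : ℝ)))

lemma lag_eq (α : ℝ) (n : ℕ) (x : ℝ) :
    assocLaguerre α n x = ∑ k ∈ Finset.range (n + 1), c α n k * x ^ k := rfl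

noncomputable def L1 (α : ℝ) (n : ℕ) (x : ℝ) : ℝ :=
  ∑ k ∈ Finset.range (n + 1), c α n k * ((k : ℝ) * x ^ (k - 1))

noncomputable def L2 (α : ℝ) (n : ℕ) (x : ℝ) : ℝ :=
  ∑ k ∈ Finset.range (n + 1), c α n k * ((k : ℝ) * (((k : ℝ) - 1) * x ^ (k - 2)))

lemma hasDerivAt_lag (α : ℝ) (n : ℕ) (x : ℝ) :
    HasDerivAt (assocLaguerre α n) (L1 α n x) x := by
  have : HasDerivAt (fun y => ∑ k ∈ Finset.range (n + 1), c α n k * y ^ k)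
      (L1 α n x) x := by
    apply HasDerivAt.fun_sum
    intro k _
    simpa using (hasDerivAt_pow k x).const_mul (c α n k)
  exact this.congr_deriv rfl

lemma hasDerivAt_L1 (α : ℝ) (n : ℕ) (x : ℝ) :
    HasDerivAt (L1 α n) (L2 α n x) x := by
  apply HasDerivAt.fun_sum
  intro k _
  have h := ((hasDerivAt_pow (k - 1) x).const_mul ((k : ℝ))).const_mul (c α n k)
  convert h using 1
  case e'_4 => rfl
  rcases k with _ | m
  · simp
  · rcases m with _ | m
    · simp
    · have h1 : (m + 1 + 1 - 1 : ℕ) = m + 1 := rfl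
      have h2 : (m + 1 + 1 - 2 : ℕ) = m := rfl
      have h3 : (m + 1 - 1 : ℕ) = m := rfl
      rw [h1, h2, h3]
      push_cast
      ring

lemma gamma_pos (α : ℝ) (hα : α > -1) (k : ℕ) : 0 < Real.Gamma ((k : ℝ) + α + 1) := by
  apply Real.Gamma_pos_of_pos
  have : (0 : ℝ) ≤ k := Nat.cast_nonneg k
  linarith

lemma rec_c (α : ℝ) (hα : α > -1) (n : ℕ) {k : ℕ} (hk : k < n) :
    ((k : ℝ) + 1) * ((k : ℝ) + α + 1) * c α n (k + 1) = ((k : ℝ) - n) * c α n k := by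
  have hΓ : Real.Gamma (((k : ℝ) + 1) + α + 1) = ((k : ℝ) + α + 1) * Real.Gamma ((k : ℝ) + α + 1) := by
    have h0 : ((k : ℝ) + α + 1) ≠ 0 := by
      have : (0 : ℝ) ≤ k := Nat.cast_nonneg k
      have : (0:ℝ) < (k : ℝ) + α + 1 := by linarith
      exact this.ne'
    have := Real.Gamma_add_one h0
    rw [← this]; ring_nf
  have hfac : ((n - k).factorial : ℝ) = ((n : ℝ) - k) * ((n - (k + 1)).factorial : ℝ) := by
    have h1 : n - k = (n - (k + 1)) + 1 := by omega
    rw [h1, Nat.factorial_succ]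
    push_cast [Nat.cast_sub (by omega : k + 1 ≤ n)]
    ring
  have hkfac : ((k + 1).factorial : ℝ) = ((k : ℝ) + 1) * (k.factorial : ℝ) := by
    rw [Nat.factorial_succ]; push_cast; ring
  unfold c
  rw [pow_succ]
  push_cast
  rw [hΓ, hfac, hkfac]
  have hΓpos := gamma_pos α hα k
  have hf1 : (((n - (k+1)).factorial : ℕ) : ℝ) ≠ 0 := Nat.cast_ne_zero.mpr (Nat.factorial_ne_zero _)
  have hf2 : ((k.factorial : ℕ) : ℝ) ≠ 0 := Nat.cast_ne_zero.mpr (Nat.factorial_ne_zero _)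
  have hknz : ((k : ℝ) + 1) ≠ 0 := by positivity
  have hanz : ((k : ℝ) + α + 1) ≠ 0 := by
    have : (0 : ℝ) ≤ k := Nat.cast_nonneg k
    have h : (0:ℝ) < (k : ℝ) + α + 1 := by linarith
    exact h.ne'
  have hnk : ((n : ℝ) - k) ≠ 0 := by
    have : (k : ℝ) < n := by exact_mod_cast hk
    linarith
  field_simp
  ring
lemma ode (α : ℝ) (hα : α > -1) (n : ℕ) (x : ℝ) :
    x * L2 α n x + (α + 1 - x) * L1 α n x + n * assocLaguerre α n x = 0 := by
  have h1 : x * L2 α n x + (α + 1) * L1 α n x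
      = ∑ k ∈ Finset.range (n + 1), (k : ℝ) * ((k : ℝ) + α) * c α n k * x ^ (k - 1) := by
    unfold L1 L2
    rw [Finset.mul_sum, Finset.mul_sum, ← Finset.sum_add_distrib]
    apply Finset.sum_congr rfl
    intro k _
    rcases k with _ | m
    · simp
    · rcases m with _ | m
      · push_cast; ring_nf
      · have h2 : (m + 1 + 1 - 2 : ℕ) = m := rfl
        have h3 : (m + 1 + 1 - 1 : ℕ) = m + 1 := rfl
        rw [h2, h3, pow_succ]
        push_cast
        ring
  have h1' : x * L2 α n x + (α + 1) * L1 α n x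
      = ∑ j ∈ Finset.range n, ((j : ℝ) - n) * c α n j * x ^ j := by
    rw [h1, Finset.sum_range_succ']
    have hterm : ∀ j ∈ Finset.range n,
        ((j + 1 : ℕ) : ℝ) * (((j + 1 : ℕ) : ℝ) + α) * c α n (j + 1) * x ^ (j + 1 - 1)
          = ((j : ℝ) - n) * c α n j * x ^ j := by
      intro j hj
      have hr := rec_c α hα n (Finset.mem_range.mp hj)
      have he : (j + 1 - 1 : ℕ) = j := rfl
      rw [he]
      push_cast
      linear_combination x ^ j * hr
    rw [Finset.sum_congr rfl hterm]
    simp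
  have h2 : x * L1 α n x = ∑ k ∈ Finset.range (n + 1), (k : ℝ) * c α n k * x ^ k := by
    unfold L1
    rw [Finset.mul_sum]
    apply Finset.sum_congr rfl
    intro k _
    rcases k with _ | m
    · simp
    · have he : (m + 1 - 1 : ℕ) = m := rfl
      rw [he, pow_succ]
      push_cast
      ring
  have h3 : (n : ℝ) * assocLaguerre α n x - x * L1 α n x
      = ∑ k ∈ Finset.range (n + 1), ((n : ℝ) - k) * c α n k * x ^ k := by
    rw [lag_eq, Finset.mul_sum, h2, ← Finset.sum_sub_distrib]
    apply Finset.sum_congr rfl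
    intro k _
    ring
  have h4 : ∑ k ∈ Finset.range (n + 1), ((n : ℝ) - k) * c α n k * x ^ k
      = -∑ j ∈ Finset.range n, ((j : ℝ) - n) * c α n j * x ^ j := by
    rw [Finset.sum_range_succ]
    have hterm : ∀ k ∈ Finset.range n, ((n : ℝ) - k) * c α n k * x ^ k
        = -(((k : ℝ) - n) * c α n k * x ^ k) := fun k _ => by ring
    rw [Finset.sum_congr rfl hterm, Finset.sum_neg_distrib]
    simp
  linear_combination h1' + h3 + h4
lemma hasDerivAt_u (α : ℝ) (hα : α > -1) (n : ℕ) {x : ℝ} (hx : 0 < x) :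
    HasDerivAt (fun y => y ^ (α + 1) * Real.exp (-y) * L1 α n y)
      (-(n : ℝ) * (x ^ α * Real.exp (-x) * assocLaguerre α n x)) x := by
  have hr : HasDerivAt (fun y : ℝ => y ^ (α + 1)) ((α + 1) * x ^ α) x := by
    have := Real.hasDerivAt_rpow_const (x := x) (p := α + 1) (Or.inl hx.ne')
    simpa using this
  have he : HasDerivAt (fun y : ℝ => Real.exp (-y)) (-Real.exp (-x)) x := by
    simpa using (hasDerivAt_neg x).exp
  have hL := hasDerivAt_L1 α n x
  have hprod := (hr.mul he).mul hL
  convert hprod using 1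
  case e'_4 => rfl
  case e'_5 => rfl
  case e'_8 => rfl
  have hx1 : x ^ (α + 1) = x ^ α * x := Real.rpow_add_one hx.ne' α
  have hode := ode α hα n x
  simp only [Pi.mul_apply]
  rw [hx1]
  linear_combination (-(x ^ α * Real.exp (-x))) * hode

lemma hasDerivAt_f (α : ℝ) (hα : α > -1) (n : ℕ) (hn : (n : ℝ) ≠ 0) {x : ℝ} (hx : 0 < x) :
    HasDerivAt (fun y => -(1 / (2 * (n : ℝ))) * (y ^ (α + 1) * Real.exp (-y) * L1 α n y) ^ 2)
      (x ^ (2 * α + 1) * Real.exp (-2 * x) * assocLaguerre α n x * L1 α n x) x := by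
  have hu := hasDerivAt_u α hα n hx
  have h2 := (hu.pow 2).const_mul (-(1 / (2 * (n : ℝ))))
  convert h2 using 1
  case e'_4 => rfl
  case e'_5 => rfl
  case e'_8 => rfl
  have hxx : x ^ (2 * α + 1) = x ^ (α + 1) * x ^ α := by
    rw [← Real.rpow_add hx]; ring_nf
  have hee : Real.exp (-2 * x) = Real.exp (-x) * Real.exp (-x) := by
    rw [← Real.exp_add]; ring_nf
  rw [hxx, hee]
  push_cast
  field_simp
lemma tendsto_u_atTop (α : ℝ) (n : ℕ) :
    Tendsto (fun y : ℝ => y ^ (α + 1) * Real.exp (-y) * L1 α n y) atTop (𝓝 0) := by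
  have hterm : ∀ k ∈ Finset.range (n + 1),
      Tendsto (fun y : ℝ => (c α n k * k) * (y ^ (α + 1 + ((k - 1 : ℕ) : ℝ)) * Real.exp (-y)))
        atTop (𝓝 0) := by
    intro k _
    have h := tendsto_rpow_mul_exp_neg_mul_atTop_nhds_zero (α + 1 + ((k - 1 : ℕ) : ℝ)) 1 one_pos
    have h' : Tendsto (fun y : ℝ => y ^ (α + 1 + ((k - 1 : ℕ) : ℝ)) * Real.exp (-y)) atTop (𝓝 0) := by
      refine h.congr fun y => by rw [neg_one_mul]
    simpa using h'.const_mul (c α n k * k)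
  have hsum := tendsto_finset_sum (Finset.range (n + 1)) hterm
  rw [Finset.sum_const_zero] at hsum
  apply hsum.congr'
  filter_upwards [eventually_gt_atTop (0 : ℝ)] with y hy
  simp only [L1, Finset.mul_sum]
  apply Finset.sum_congr rfl
  intro k _
  rcases k with _ | m
  · simp
  · have he : (m + 1 - 1 : ℕ) = m := rfl
    rw [he]
    have hpow : y ^ (α + 1 + (m : ℝ)) = y ^ (α + 1) * y ^ m := by
      rw [Real.rpow_add hy, Real.rpow_natCast]
    rw [hpow]
    push_cast
    ring

lemma int_aux (s : ℝ) (hs : -1 < s) :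
    MeasureTheory.IntegrableOn (fun x : ℝ => x ^ s * Real.exp (-2 * x)) (Set.Ioi 0) := by
  have hΓ := Real.GammaIntegral_convergent (by linarith : (0 : ℝ) < s + 1)
  apply MeasureTheory.Integrable.mono' hΓ
  · apply ContinuousOn.aestronglyMeasurable ?_ measurableSet_Ioi
    apply ContinuousOn.mul
    · exact ContinuousOn.rpow_const continuousOn_id fun x hx => Or.inl (ne_of_gt hx)
    · exact (Real.continuous_exp.comp (by continuity)).continuousOn
  · filter_upwards [MeasureTheory.ae_restrict_mem measurableSet_Ioi] with x hx
    have hx0 : (0 : ℝ) < x := hx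
    rw [Real.norm_eq_abs, abs_of_nonneg (by positivity)]
    have h1 : Real.exp (-2 * x) ≤ Real.exp (-x) := Real.exp_le_exp.mpr (by linarith)
    have h2 : x ^ (s + 1 - 1) = x ^ s := by norm_num
    rw [h2]
    nlinarith [Real.rpow_pos_of_pos hx0 s, Real.exp_pos (-2 * x)]

lemma integrable_g (α : ℝ) (hα : α > -1) (n : ℕ) :
    MeasureTheory.IntegrableOn
      (fun x : ℝ => x ^ (2 * α + 1) * Real.exp (-2 * x) * assocLaguerre α n x * L1 α n x)
      (Set.Ioi 0) := by
  have hint : MeasureTheory.IntegrableOn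
      (fun x : ℝ => ∑ j ∈ Finset.range (n + 1), ∑ k ∈ Finset.range (n + 1),
        (c α n k * (c α n j * j)) * (x ^ (2 * α + 1 + (k : ℝ) + ((j - 1 : ℕ) : ℝ)) * Real.exp (-2 * x)))
      (Set.Ioi 0) := by
    apply MeasureTheory.integrable_finset_sum
    intro j _
    apply MeasureTheory.integrable_finset_sum
    intro k _
    refine MeasureTheory.Integrable.const_mul ?_ _
    apply int_aux
    have h1 : (0 : ℝ) ≤ (k : ℝ) := Nat.cast_nonneg k
    have h2 : (0 : ℝ) ≤ ((j - 1 : ℕ) : ℝ) := Nat.cast_nonneg _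
    linarith
  apply hint.congr_fun ?_ measurableSet_Ioi
  intro x hx
  have hx0 : (0 : ℝ) < x := hx
  simp only
  symm
  rw [lag_eq]
  simp only [L1, Finset.mul_sum, Finset.sum_mul]
  apply Finset.sum_congr rfl
  intro j _
  apply Finset.sum_congr rfl
  intro k _
  rcases j with _ | m
  · simp
  · have he : (m + 1 - 1 : ℕ) = m := rfl
    rw [he]
    have hpow : x ^ (2 * α + 1 + (k : ℝ) + (m : ℝ)) = x ^ (2 * α + 1) * x ^ k * x ^ m := by
      rw [Real.rpow_add hx0, Real.rpow_add hx0, Real.rpow_natCast, Real.rpow_natCast]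
    rw [hpow]
    push_cast
    ring

end LagAux

open LagAux in
/-- `∫_0^∞ x^{2α+1} e^{-2x} L_n^{(α)}(x) (L_n^{(α)})'(x) dx = 0`. -/
theorem integral_laguerre_mul_deriv_eq_zero (α : ℝ) (hα : α > -1) (n : ℕ) :
    ∫ x in Set.Ioi (0 : ℝ),
      x ^ (2 * α + 1) * Real.exp (-2 * x) * assocLaguerre α n x *
        deriv (assocLaguerre α n) x = 0 := by
  have hderiv_eq : deriv (assocLaguerre α n) = fun x => L1 α n x :=
    funext fun x => (hasDerivAt_lag α n x).deriv
  rw [hderiv_eq]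
  rcases Nat.eq_zero_or_pos n with hn | hn
  · subst hn
    have hz : ∀ x : ℝ, L1 α 0 x = 0 := by
      intro x
      simp [L1]
    simp [hz]
  · have hn' : (n : ℝ) ≠ 0 := Nat.cast_ne_zero.mpr hn.ne'
    set f : ℝ → ℝ := fun y => -(1 / (2 * (n : ℝ))) * (y ^ (α + 1) * Real.exp (-y) * L1 α n y) ^ 2
      with hf
    have hcont : ContinuousWithinAt f (Set.Ici 0) 0 := by
      apply ContinuousAt.continuousWithinAt
      apply ContinuousAt.mul continuousAt_const
      apply ContinuousAt.pow
      apply ContinuousAt.mul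
      apply ContinuousAt.mul
      · exact Real.continuousAt_rpow_const 0 (α + 1) (Or.inr (by linarith))
      · exact (Real.continuous_exp.comp continuous_neg).continuousAt
      · exact (hasDerivAt_L1 α n 0).differentiableAt.continuousAt
    have hderiv : ∀ x ∈ Set.Ioi (0 : ℝ), HasDerivAt f
        (x ^ (2 * α + 1) * Real.exp (-2 * x) * assocLaguerre α n x * L1 α n x) x :=
      fun x hx => hasDerivAt_f α hα n hn' hx
    have htop : Tendsto f atTop (𝓝 0) := by
      have h := ((tendsto_u_atTop α n).pow 2).const_mul (-(1 / (2 * (n : ℝ))))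
      rw [hf]
      convert h using 2
      simp
    have h := MeasureTheory.integral_Ioi_of_hasDerivAt_of_tendsto hcont hderiv
      (integrable_g α hα n) htop
    rw [h, hf]
    have h0 : (0 : ℝ) ^ (α + 1) = 0 := Real.zero_rpow (by linarith)
    simp [h0]
end

section
/- Fix α, β ∈ ℝ. For every θ ∈ (0, π), lim_{N→∞} N · Σ_{n=N+1}^∞ 2·(cos((n + (α+β+1)/2)·θ − (α + 1/2)·π/2))² / n² = 1. -/
open Filter Topology

lemma telescope_hasSum (f : ℕ → ℝ) (h0 : Tendsto f atTop (nhds 0))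
    (hmono : ∀ n, f (n+1) ≤ f n) :
    HasSum (fun n => f n - f (n+1)) (f 0) := by
  rw [hasSum_iff_tendsto_nat_of_nonneg (fun n => sub_nonneg.2 (hmono n))]
  simp only [Finset.sum_range_sub' f]
  simpa using h0.const_sub (f 0)

lemma cos_sum_bound (φ ψ : ℝ) (m : ℕ) (h : Complex.exp (φ * Complex.I) ≠ 1) :
    |∑ i ∈ Finset.range m, Real.cos (φ * i + ψ)| ≤
      2 / ‖Complex.exp (φ * Complex.I) - 1‖ := by
  set x : ℂ := Complex.exp (φ * Complex.I) with hx
  have key : ∑ i ∈ Finset.range m, Real.cos (φ * i + ψ)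
      = (Complex.exp (ψ * Complex.I) * ∑ i ∈ Finset.range m, x ^ i).re := by
    rw [Finset.mul_sum, Complex.re_sum]
    refine Finset.sum_congr rfl fun i _ => ?_
    rw [hx, ← Complex.exp_nat_mul, ← Complex.exp_add]
    rw [← Complex.exp_ofReal_mul_I_re (φ * i + ψ)]
    congr 1
    push_cast
    ring
  rw [key]
  calc |(Complex.exp (ψ * Complex.I) * ∑ i ∈ Finset.range m, x ^ i).re|
      ≤ ‖Complex.exp (ψ * Complex.I) * ∑ i ∈ Finset.range m, x ^ i‖ :=
        Complex.abs_re_le_norm _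
    _ = ‖∑ i ∈ Finset.range m, x ^ i‖ := by
        rw [norm_mul, Complex.norm_exp_ofReal_mul_I, one_mul]
    _ ≤ 2 / ‖x - 1‖ := by
        rw [geom_sum_eq h, norm_div]
        gcongr
        calc ‖x ^ m - 1‖ ≤ ‖x ^ m‖ + ‖(1:ℂ)‖ := by
              simpa using norm_sub_le (x ^ m) (1 : ℂ)
          _ = 2 := by
              rw [norm_pow, hx, Complex.norm_exp_ofReal_mul_I, one_pow, norm_one]; norm_num

lemma abel_tail (a b : ℕ → ℝ) (C : ℝ)
    (hC : ∀ m, |∑ i ∈ Finset.range m, a i| ≤ C)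
    (hb0 : ∀ n, 0 ≤ b n) (hba : ∀ n, b (n+1) ≤ b n)
    (hsum : Summable (fun n => a n * b n)) :
    |∑' n, a n * b n| ≤ C * b 0 := by
  have hCnn : 0 ≤ C := le_trans (abs_nonneg _) (hC 0)
  have hP : ∀ n, |∑ i ∈ Finset.range n, a i * b i| ≤ C * b 0 := by
    intro n
    rcases Nat.eq_zero_or_pos n with rfl | hn
    · simpa using mul_nonneg hCnn (hb0 0)
    have hby := Finset.sum_range_by_parts b a n
    simp only [smul_eq_mul] at hby
    have : ∑ i ∈ Finset.range n, a i * b i = ∑ i ∈ Finset.range n, b i * a i := by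
      simp [mul_comm]
    rw [this, hby]
    calc |b (n-1) * ∑ i ∈ Finset.range n, a i -
            ∑ i ∈ Finset.range (n-1), (b (i+1) - b i) * ∑ j ∈ Finset.range (i+1), a j|
        ≤ |b (n-1) * ∑ i ∈ Finset.range n, a i| +
            |∑ i ∈ Finset.range (n-1), (b (i+1) - b i) * ∑ j ∈ Finset.range (i+1), a j| :=
          abs_sub _ _
      _ ≤ b (n-1) * C + ∑ i ∈ Finset.range (n-1), (b i - b (i+1)) * C := by
          gcongr
          · rw [abs_mul, abs_of_nonneg (hb0 _)]
            exact mul_le_mul_of_nonneg_left (hC _) (hb0 _)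
          · refine (Finset.abs_sum_le_sum_abs _ _).trans ?_
            refine Finset.sum_le_sum fun i _ => ?_
            rw [abs_mul, abs_sub_comm, abs_of_nonneg (sub_nonneg.2 (hba i))]
            exact mul_le_mul (le_refl _) (hC _) (abs_nonneg _) (sub_nonneg.2 (hba i))
      _ = C * b 0 := by
          rw [← Finset.sum_mul, Finset.sum_range_sub' b]
          ring
  have htend := hsum.hasSum.tendsto_sum_nat
  exact le_of_tendsto htend.abs (Eventually.of_forall hP)

lemma sumb (N : ℕ) : Summable (fun n : ℕ => 1/((n:ℝ)+N+1)^2) := by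
  have base : Summable (fun n : ℕ => 1/((n:ℝ))^2) :=
    Real.summable_one_div_nat_pow.2 (by norm_num)
  have := (summable_nat_add_iff (N+1)).2 base
  refine this.congr fun n => ?_
  push_cast
  ring_nf

lemma suma (N : ℕ) (h : ℕ → ℝ) (hh : ∀ n, |h n| ≤ 1) :
    Summable (fun n : ℕ => h n * (1/((n:ℝ)+N+1)^2)) := by
  refine Summable.of_norm ((sumb N).of_nonneg_of_le (fun n => norm_nonneg _) fun n => ?_)
  rw [norm_mul, Real.norm_of_nonneg (show (0:ℝ) ≤ 1/((n:ℝ)+N+1)^2 by positivity)]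
  calc ‖h n‖ * (1/((n:ℝ)+N+1)^2) ≤ 1 * (1/((n:ℝ)+N+1)^2) := by
        gcongr; exact hh n
    _ = 1/((n:ℝ)+N+1)^2 := one_mul _

lemma div_succ_tendsto : Tendsto (fun N : ℕ => (N:ℝ)/((N:ℝ)+1)) atTop (nhds 1) := by
  have : (fun N : ℕ => (N:ℝ)/((N:ℝ)+1)) = fun N : ℕ => 1 - 1/((N:ℝ)+1) := by
    funext N
    have : ((N:ℝ)+1) ≠ 0 := by positivity
    field_simp
    ring
  rw [this]
  simpa using (tendsto_const_nhds (x := (1:ℝ))).sub tendsto_one_div_add_atTop_nhds_zero_nat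

lemma div_sq_tendsto : Tendsto (fun N : ℕ => (N:ℝ)/((N:ℝ)+1)^2) atTop (nhds 0) := by
  apply squeeze_zero (fun N => by positivity) (fun N => ?_) tendsto_one_div_add_atTop_nhds_zero_nat
  have h1 : (0:ℝ) < (N:ℝ)+1 := by positivity
  rw [div_le_div_iff₀ (by positivity) h1]
  nlinarith [Nat.cast_nonneg (α := ℝ) N]

lemma shift_tendsto (r : ℝ) :
    Tendsto (fun n : ℕ => 1/((n:ℝ)+r)) atTop (nhds 0) := by
  have h1 : Tendsto (fun n : ℕ => (n:ℝ)+r) atTop atTop :=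
    tendsto_atTop_add_const_right _ r tendsto_natCast_atTop_atTop
  simpa [one_div, Pi.inv_def] using h1.inv_tendsto_atTop

lemma partA : Tendsto (fun N : ℕ => (N:ℝ) * ∑' n : ℕ, 1/((n:ℝ)+N+1)^2) atTop (nhds 1) := by
  have hlow : ∀ N : ℕ, (N:ℝ)/((N:ℝ)+1) ≤ (N:ℝ) * ∑' n : ℕ, 1/((n:ℝ)+N+1)^2 := by
    intro N
    have hf := telescope_hasSum (fun n : ℕ => 1/((n:ℝ)+N+1))
      (by simpa [add_assoc] using shift_tendsto ((N:ℝ)+1))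
      (fun n => by
        apply one_div_le_one_div_of_le (by positivity)
        push_cast; linarith)
    have hle : (1:ℝ)/((N:ℝ)+1) ≤ ∑' n : ℕ, 1/((n:ℝ)+N+1)^2 := by
      have key := Summable.tsum_le_tsum (g := fun n : ℕ => 1/((n:ℝ)+N+1)^2) ?_ hf.summable (sumb N)
      · rw [hf.tsum_eq] at key
        simpa using key
      · intro n
        have hx : (0:ℝ) < (n:ℝ)+N+1 := by positivity
        have he : 1/((n:ℝ)+N+1) - 1/(((n+1:ℕ):ℝ)+N+1) = 1/(((n:ℝ)+N+1)*((n:ℝ)+N+2)) := by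
          push_cast
          rw [div_sub_div _ _ (by positivity) (by positivity)]
          congr 1 <;> ring
        simp only [he]
        apply one_div_le_one_div_of_le (by positivity)
        nlinarith
    calc (N:ℝ)/((N:ℝ)+1) = (N:ℝ) * (1/((N:ℝ)+1)) := by ring
      _ ≤ (N:ℝ) * ∑' n : ℕ, 1/((n:ℝ)+N+1)^2 :=
          mul_le_mul_of_nonneg_left hle (Nat.cast_nonneg N)
  have hhigh : ∀ N : ℕ, 1 ≤ N → (N:ℝ) * (∑' n : ℕ, 1/((n:ℝ)+N+1)^2) ≤ 1 := by
    intro N hN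
    have hNpos : (0:ℝ) < (N:ℝ) := by exact_mod_cast hN
    have hg := telescope_hasSum (fun n : ℕ => 1/((n:ℝ)+N))
      (shift_tendsto (N:ℝ))
      (fun n => by
        apply one_div_le_one_div_of_le (by positivity)
        push_cast; linarith)
    have hle : (∑' n : ℕ, 1/((n:ℝ)+N+1)^2) ≤ 1/(N:ℝ) := by
      have key := Summable.tsum_le_tsum (f := fun n : ℕ => 1/((n:ℝ)+N+1)^2) ?_ (sumb N) hg.summable
      · rw [hg.tsum_eq] at key
        simpa using key
      · intro n
        have hx : (0:ℝ) < (n:ℝ)+N := by linarith [Nat.cast_nonneg (α := ℝ) n]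
        have he : 1/((n:ℝ)+N) - 1/(((n+1:ℕ):ℝ)+N) = 1/(((n:ℝ)+N)*((n:ℝ)+N+1)) := by
          push_cast
          rw [div_sub_div _ _ (by positivity) (by positivity)]
          congr 1 <;> ring
        simp only [he]
        apply one_div_le_one_div_of_le (by positivity)
        nlinarith
    calc (N:ℝ) * (∑' n : ℕ, 1/((n:ℝ)+N+1)^2) ≤ (N:ℝ) * (1/(N:ℝ)) :=
          mul_le_mul_of_nonneg_left hle (Nat.cast_nonneg N)
      _ = 1 := by field_simp
  refine tendsto_of_tendsto_of_tendsto_of_le_of_le' div_succ_tendsto tendsto_const_nhds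
    (Eventually.of_forall hlow) ?_
  filter_upwards [eventually_ge_atTop 1] with N hN using hhigh N hN

lemma exp_ne_one (θ : ℝ) (hθ0 : 0 < θ) (hθπ : θ < Real.pi) :
    Complex.exp ((2*θ : ℝ) * Complex.I) ≠ 1 := by
  intro h
  rw [Complex.exp_eq_one_iff] at h
  obtain ⟨n, hn⟩ := h
  have him := congrArg Complex.im hn
  simp [Complex.mul_im, Complex.mul_re] at him
  have hpi := Real.pi_pos
  rcases le_or_gt (n:ℝ) 0 with h0 | h0
  · nlinarith
  · have hn1 : (1:ℝ) ≤ (n:ℝ) := by exact_mod_cast Int.cast_pos.mp (by exact_mod_cast h0)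
    nlinarith

lemma partB (θ : ℝ) (hθ0 : 0 < θ) (hθπ : θ < Real.pi) (ψ : ℕ → ℝ) :
    Tendsto (fun N : ℕ =>
      (N:ℝ) * ∑' n : ℕ, Real.cos (2*θ*n + ψ N) * (1/((n:ℝ)+N+1)^2)) atTop (nhds 0) := by
  have hx1 := exp_ne_one θ hθ0 hθπ
  set cst : ℝ := ‖Complex.exp ((2*θ:ℝ) * Complex.I) - 1‖ with hcst
  have hcstpos : 0 < cst := norm_pos_iff.mpr (sub_ne_zero.2 hx1)
  have hbound : ∀ N : ℕ,
      ‖(N:ℝ) * ∑' n : ℕ, Real.cos (2*θ*n + ψ N) * (1/((n:ℝ)+N+1)^2)‖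
        ≤ (2/cst) * ((N:ℝ)/((N:ℝ)+1)^2) := by
    intro N
    have hab := abel_tail (fun n : ℕ => Real.cos (2*θ*n + ψ N))
      (fun n : ℕ => 1/((n:ℝ)+N+1)^2) (2/cst)
      (fun m => cos_sum_bound (2*θ) (ψ N) m hx1)
      (fun n => by positivity)
      (fun n => by
        apply one_div_le_one_div_of_le (by positivity)
        gcongr <;> push_cast <;> linarith)
      (suma N _ (fun n => by
        rw [abs_le]; exact ⟨Real.neg_one_le_cos _, Real.cos_le_one _⟩))
    rw [Real.norm_eq_abs, abs_mul, Nat.abs_cast]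
    calc (N:ℝ) * |∑' n : ℕ, Real.cos (2*θ*n + ψ N) * (1/((n:ℝ)+N+1)^2)|
        ≤ (N:ℝ) * ((2/cst) * (1/(((0:ℕ):ℝ)+N+1)^2)) :=
          mul_le_mul_of_nonneg_left hab (Nat.cast_nonneg N)
      _ = (2/cst) * ((N:ℝ)/((N:ℝ)+1)^2) := by
          push_cast
          ring
  have hG : Tendsto (fun N : ℕ => (2/cst) * ((N:ℝ)/((N:ℝ)+1)^2)) atTop (nhds 0) := by
    simpa using div_sq_tendsto.const_mul (2/cst)
  exact squeeze_zero_norm hbound hG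

/-- On-diagonal asymptotics for the trigonometric system appearing in the Darboux
formula for Jacobi polynomials, with general phase shifts determined by `α` and `β`. -/
theorem truncated_cos_phase_asymptotics (α β : ℝ) (θ : ℝ) (hθ : θ ∈ Set.Ioo 0 Real.pi) :
    Tendsto
      (fun N : ℕ => (N : ℝ) *
        ∑' n : ℕ,
          2 * Real.cos (((n + N + 1 : ℕ) + (α + β + 1) / 2) * θ - (α + 1 / 2) * Real.pi / 2) ^ 2 /
            ((n + N + 1 : ℕ) : ℝ) ^ 2)
      atTop (nhds 1) := by
  obtain ⟨hθ0, hθπ⟩ := hθ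
  set c : ℝ := (α + β + 1) / 2 with hc
  set d : ℝ := (α + 1 / 2) * Real.pi / 2 with hd
  set ψ : ℕ → ℝ := fun N => 2*θ*((N:ℝ)+1+c) - 2*d with hψ
  have habs : ∀ (M : ℕ) (n : ℕ), |Real.cos (2*θ*n + ψ M)| ≤ 1 := fun M n => by
    rw [abs_le]; exact ⟨Real.neg_one_le_cos _, Real.cos_le_one _⟩
  have heq : (fun N : ℕ => (N : ℝ) *
      ∑' n : ℕ,
        2 * Real.cos (((n + N + 1 : ℕ) + c) * θ - d) ^ 2 /
          ((n + N + 1 : ℕ) : ℝ) ^ 2)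
      = fun N : ℕ =>
        ((N:ℝ) * ∑' n : ℕ, 1/((n:ℝ)+N+1)^2) +
        ((N:ℝ) * ∑' n : ℕ, Real.cos (2*θ*n + ψ N) * (1/((n:ℝ)+N+1)^2)) := by
    funext N
    have hterm : ∀ n : ℕ,
        2 * Real.cos (((n + N + 1 : ℕ) + c) * θ - d) ^ 2 / ((n + N + 1 : ℕ) : ℝ) ^ 2
          = 1/((n:ℝ)+N+1)^2 + Real.cos (2*θ*n + ψ N) * (1/((n:ℝ)+N+1)^2) := by
      intro n
      have hq : ((n + N + 1 : ℕ) : ℝ) = (n:ℝ)+N+1 := by push_cast; ring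
      have harg : Real.cos (2 * ((((n + N + 1 : ℕ):ℝ) + c) * θ - d))
          = Real.cos (2*θ*n + ψ N) := by
        congr 1
        rw [hq, hψ]
        ring
      rw [Real.cos_sq, harg, hq]
      have hx : ((n:ℝ)+N+1) ≠ 0 := by positivity
      field_simp
    rw [tsum_congr hterm,
      Summable.tsum_add (sumb N) (suma N _ (habs N)), mul_add]
  rw [heq]
  simpa using partA.add (partB θ hθ0 hθπ ψ)
end
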